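/- arXiv:2312.05433 — 8 statements merged into one kernel-verified Lean document; each statement's English description precedes it below -/
import Mathlib

section
/- For every stochastic deterministic finite automaton A = (S, Σ, δ, p, s₀), the family (L_A(t))_{t ∈ Σ*} indexed by all traces is summable and its sum satisfies ∑_{t ∈ Σ*} L_A(t) ≤ 1. -/
open scoped Classical BigOperators

/-- Vertices of a stochastic directed action graph: the input node `inp`,
the output node `out`, and the action-labeled nodes `node n` for `n : N`. -/
inductive Vtx (N : Type) where
  | inp : Vtx N
  | out : Vtx N
  | node : N → Vtx N
  deriving DecidableEq, Fintype

/-- Stochastic deterministic finite automaton over states `S` and actions `Act`. -/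
structure SDFA (S Act : Type) [Fintype S] [Fintype Act] where
  δ : S → Act → S
  p : S → Act → ℝ
  s0 : S
  p_nonneg : ∀ s a, 0 ≤ p s a
  p_le_one : ∀ s a, p s a ≤ 1
  sum_le_one : ∀ s, ∑ a, p s a ≤ 1

variable {S Act : Type} [Fintype S] [Fintype Act]

/-- `π(s, t)` defined recursively from a transition function `δ` and
transition probability function `p`:
`π(s, ε) = 1 − ∑_{λ} p(s,λ)` and `π(s, λ·t') = p(s,λ) · π(δ(s,λ), t')`. -/
def piFun {σ : Type} (δ : σ → Act → σ) (p : σ → Act → ℝ) : σ → List Act → ℝ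
  | s, [] => 1 - ∑ a, p s a
  | s, a :: t => p s a * piFun δ p (δ s a) t

/-- The function `π_A` of an SDFA `A`. -/
def SDFA.pi (M : SDFA S Act) : S → List Act → ℝ := piFun M.δ M.p

/-- The stochastic language of an SDFA: `L_A(t) = π_A(s₀, t)`. -/
def SDFA.lang (M : SDFA S Act) (t : List Act) : ℝ := M.pi M.s0 t

/-- The state reached from `s` by running the word `w`. -/
def SDFA.run (M : SDFA S Act) : S → List Act → S
  | s, [] => s
  | s, a :: w => M.run (M.δ s a) w

/-- `posWord M s w` holds if every transition along `w` from `s` has positive probability. -/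
def SDFA.posWord (M : SDFA S Act) : S → List Act → Prop
  | _, [] => True
  | s, a :: w => 0 < M.p s a ∧ M.posWord (M.δ s a) w

/-- `y` is reachable from `x` via transitions of positive probability. -/
def SDFA.Reach (M : SDFA S Act) (x y : S) : Prop :=
  ∃ w : List Act, M.posWord x w ∧ M.run x w = y

/-- Stochastic directed action graph over nodes `N` and actions `Act`.
The flow relation `γ` never enters the input node and never leaves the output
node; the flow probability function `q` is extended by `0` outside of `γ`,
and the flow probabilities on the outgoing arcs of every node (including the
input node) sum to `1`. -/
structure SDAG (N Act : Type) [Fintype N] [Fintype Act] where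
  β : N → Act
  γ : Vtx N → Vtx N → Prop
  q : Vtx N → Vtx N → ℝ
  q_nonneg : ∀ x y, 0 ≤ q x y
  q_le_one : ∀ x y, q x y ≤ 1
  q_eq_zero : ∀ x y, ¬ γ x y → q x y = 0
  no_into_inp : ∀ x, ¬ γ x Vtx.inp
  no_from_out : ∀ y, ¬ γ Vtx.out y
  sum_q : ∀ x : Vtx N, x ≠ Vtx.out → ∑ y, q x y = 1

/-- An execution: a finite sequence of vertices beginning with the input node,
ending with the output node, whose consecutive pairs all lie in the flow relation `γ`. -/
def IsExec {N : Type} (γ : Vtx N → Vtx N → Prop) (l : List (Vtx N)) : Prop :=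
  l.Chain' γ ∧ l.head? = some Vtx.inp ∧ l.getLast? = some Vtx.out

/-- The probability of an execution: the product of `q` over its consecutive pairs. -/
def execProb {N : Type} (q : Vtx N → Vtx N → ℝ) (l : List (Vtx N)) : ℝ :=
  ((l.zip l.tail).map fun pr => q pr.1 pr.2).prod

/-- The trace confirmed by an execution: the labels of its entries other than
the input and output nodes, in order. -/
def execTrace {N : Type} (β : N → Act) (l : List (Vtx N)) : List Act :=
  l.filterMap (fun v => match v with | Vtx.node n => some (β n) | _ => none)

/-- The stochastic language of an action graph given by flow relation `γ`,
flow probabilities `q` and labeling `β`: `L(t)` is the sum of the probabilities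
of all executions confirming `t` (`0` if there are none). -/
noncomputable def gLang {N : Type} (γ : Vtx N → Vtx N → Prop)
    (q : Vtx N → Vtx N → ℝ) (β : N → Act) (t : List Act) : ℝ :=
  ∑' l : {l : List (Vtx N) // IsExec γ l ∧ execTrace β l = t}, execProb q (l : List (Vtx N))

/-- The stochastic language of an SDAG. -/
noncomputable def SDAG.lang {N : Type} [Fintype N] (G : SDAG N Act) : List Act → ℝ :=
  gLang G.γ G.q G.β

/-- A (γ, β) action-graph structure is deterministic: distinct successors of any
node in `N ∪ {i}` carry different labels. -/
def IsDetData {N : Type} (γ : Vtx N → Vtx N → Prop) (β : N → Act) : Prop :=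
  ∀ x : Vtx N, x ≠ Vtx.out → ∀ n₁ n₂ : N,
    γ x (Vtx.node n₁) → γ x (Vtx.node n₂) → n₁ ≠ n₂ → β n₁ ≠ β n₂

/-- A deterministic SDAG. -/
def SDAG.IsDet {N : Type} [Fintype N] (G : SDAG N Act) : Prop := IsDetData G.γ G.β

/-- The transitions of an SDFA: pairs (state, action) of positive probability;
the transition `(x, λ)` represents the triple `(x, λ, δ(x,λ))`. -/
abbrev SDFA.TransOf (M : SDFA S Act) : Type := {xa : S × Act // 0 < M.p xa.1 xa.2}

/-- The target state of a transition. -/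
def SDFA.tgt (M : SDFA S Act) (n : M.TransOf) : S := M.δ n.1.1 n.1.2

/-- The labeling function of `SDAG(A)`: a transition `(x, λ, y)` is labeled `λ`. -/
def dagBeta (M : SDFA S Act) (n : M.TransOf) : Act := n.1.2

/-- The flow relation of `SDAG(A)`. -/
def dagGamma (M : SDFA S Act) : Vtx M.TransOf → Vtx M.TransOf → Prop
  | Vtx.inp, Vtx.node n => n.1.1 = M.s0
  | Vtx.inp, Vtx.out => ∑ μ, M.p M.s0 μ < 1
  | Vtx.node m, Vtx.node n => n.1.1 = M.tgt m
  | Vtx.node m, Vtx.out => ∑ μ, M.p (M.tgt m) μ < 1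
  | _, _ => False

/-- The flow probability function of `SDAG(A)` (extended by `0` outside the arcs). -/
noncomputable def dagQ (M : SDFA S Act) : Vtx M.TransOf → Vtx M.TransOf → ℝ
  | Vtx.inp, Vtx.node n => if n.1.1 = M.s0 then M.p n.1.1 n.1.2 else 0
  | Vtx.inp, Vtx.out =>
      if ∑ μ, M.p M.s0 μ < 1 then 1 - ∑ μ, M.p M.s0 μ else 0
  | Vtx.node m, Vtx.node n => if n.1.1 = M.tgt m then M.p n.1.1 n.1.2 else 0
  | Vtx.node m, Vtx.out =>
      if ∑ μ, M.p (M.tgt m) μ < 1 then 1 - ∑ μ, M.p (M.tgt m) μ else 0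
  | _, _ => 0

/-- The transition probability function of `SFA(G)`:
`p(x,λ) = ∑_{y ∈ N : (x,y) ∈ γ, β(y) = λ} q(x,y)`. -/
noncomputable def sfaP {N : Type} [Fintype N] (G : SDAG N Act) (x : Vtx N) (a : Act) : ℝ :=
  ∑ y : N, if G.γ x (Vtx.node y) ∧ G.β y = a then G.q x (Vtx.node y) else 0

/-!
Every finite set of traces lies among the traces of length less than some `n`. Unfolding the
first letter, the mass that `π(s, ·)` puts on traces of length less than `n + 1` is
`(1 - ∑ λ, p(s, λ)) + ∑ λ, p(s, λ) · m(δ(s, λ))`, where `m ≤ 1` bounds the mass on traces of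
length less than `n`; this is again at most `1`. Hence all finite partial sums of `L_A` are at
most `1`, and a nonnegative real family with bounded partial sums is summable.
-/

open Finset

section piFun

variable {σ : Type} {δ : σ → Act → σ} {p : σ → Act → ℝ}

def consAll [DecidableEq Act] (v : Finset (List Act)) : Finset (List Act) :=
  (univ ×ˢ v).image fun x => x.1 :: x.2

theorem piFun_nonneg (hp : ∀ s a, 0 ≤ p s a) (hsum : ∀ s, ∑ a, p s a ≤ 1) (s : σ)
    (t : List Act) : 0 ≤ piFun δ p s t := by
  induction t generalizing s with
  | nil => simpa [piFun] using hsum s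
  | cons a t ih => exact mul_nonneg (hp s a) (ih _)

theorem sum_piFun_insert_nil_consAll [DecidableEq Act] (v : Finset (List Act)) (s : σ) :
    ∑ t ∈ insert [] (consAll v), piFun δ p s t = piFun δ p s [] + ∑ a, p s a * ∑ t ∈ v, piFun δ p (δ s a) t := by
  rw [consAll, sum_insert (by simp), sum_image (fun x _ y _ h => by simpa [Prod.ext_iff] using h),
    sum_product]
  simp only [piFun, mul_sum]

theorem subset_insert_nil_consAll_tail [DecidableEq Act] (u : Finset (List Act)) :
    u ⊆ insert [] (consAll ((u.erase []).image List.tail)) := by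
  intro t ht
  rcases t with _ | ⟨a, t⟩
  · exact mem_insert_self _ _
  · refine mem_insert_of_mem (mem_image.2 ⟨(a, t), ?_, rfl⟩)
    simpa using ⟨a :: t, by simpa using ht, rfl⟩

theorem sum_piFun_le_one (hp : ∀ s a, 0 ≤ p s a) (hsum : ∀ s, ∑ a, p s a ≤ 1)
    (u : Finset (List Act)) (s : σ) : ∑ t ∈ u, piFun δ p s t ≤ 1 := by
  suffices h : ∀ n (u : Finset (List Act)), (∀ t ∈ u, t.length < n) →
      ∀ s, ∑ t ∈ u, piFun δ p s t ≤ 1 from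
    h _ u (fun t ht => Nat.lt_succ_of_le (le_sup (f := List.length) ht)) s
  intro n
  induction n with
  | zero =>
    intro u hu s
    simp [eq_empty_of_forall_notMem fun t ht => Nat.not_lt_zero _ (hu t ht)]
  | succ n ih =>
    intro u hu s
    have htail : ∀ t ∈ (u.erase []).image List.tail, t.length < n := by
      simp only [mem_image, mem_erase]
      rintro _ ⟨t, ⟨hne, ht⟩, rfl⟩
      have := hu t ht
      have := List.length_pos_iff.2 hne
      rw [List.length_tail]
      omega
    calc ∑ t ∈ u, piFun δ p s t
        ≤ ∑ t ∈ insert [] (consAll ((u.erase []).image List.tail)), piFun δ p s t :=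
          sum_le_sum_of_subset_of_nonneg (subset_insert_nil_consAll_tail u)
            fun t _ _ => piFun_nonneg hp hsum s t
      _ = (1 - ∑ a, p s a) + ∑ a, p s a * ∑ t ∈ (u.erase []).image List.tail,
            piFun δ p (δ s a) t := sum_piFun_insert_nil_consAll _ s
      _ ≤ (1 - ∑ a, p s a) + ∑ a, p s a * 1 := by
          gcongr with a
          exacts [hp s a, ih _ htail _]
      _ = 1 := by simp

end piFun

/-- For every SDFA `A`, the family `(L_A(t))_{t ∈ Σ*}` is summable
and `∑_{t ∈ Σ*} L_A(t) ≤ 1`. -/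
theorem sdfa_lang_summable_and_tsum_le_one {S Act : Type} [Fintype S] [Fintype Act]
    (M : SDFA S Act) :
    Summable M.lang ∧ ∑' t : List Act, M.lang t ≤ 1 := by
  have hnonneg : 0 ≤ M.lang := fun t => piFun_nonneg M.p_nonneg M.sum_le_one M.s0 t
  have hbound : ∀ u : Finset (List Act), ∑ t ∈ u, M.lang t ≤ 1 :=
    fun u => sum_piFun_le_one M.p_nonneg M.sum_le_one u M.s0
  exact ⟨summable_of_sum_le hnonneg hbound, Real.tsum_le_of_sum_le hnonneg hbound⟩
end

section
/- Let A = (S, Σ, δ, p, s₀) be a stochastic deterministic finite automaton such that for every state s reachable from s₀ via transitions of positive probability there exists a state s' reachable from s via transitions of positive probability (possibly s' = s) with ∑_{λ∈Σ} p(s',λ) < 1. Then ∑_{t ∈ Σ*} L_A(t) = 1, i.e., L_A is a stochastic language (a probability distribution over traces). -/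
open scoped Classical BigOperators

variable {S Act : Type} [Fintype S] [Fintype Act]

/-! `L_A(t)` is the probability that a run of `A` from `s₀` halts right after reading `t`, so
the traces of length at most `n` carry total mass `1 - σ(s₀, n + 1)`, where `σ(s, n)` is the
probability that a run from `s` performs at least `n` steps. Since there are finitely many
states, one `K` and one `c < 1` work for all reachable states: `σ(s, K) ≤ c`. The set of
reachable states is closed under transitions of positive probability, so
`σ(s, n + K) ≤ c · σ(s, n)`, which forces `σ(s₀, n) → 0`. -/

open Filter Topology

theorem hasSum_of_tendsto_sum_of_nonneg {ι : Type*} {f : ι → ℝ} (hf : 0 ≤ f)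
    {u : ℕ → Finset ι} (hu : Monotone u) (hcover : ∀ i, ∃ n, i ∈ u n) {a : ℝ}
    (h : Tendsto (fun n => ∑ i ∈ u n, f i) atTop (𝓝 a)) : HasSum f a := by
  have hu' : Tendsto u atTop atTop := hu.tendsto_atTop_finset hcover
  have hmono : Monotone fun n => ∑ i ∈ u n, f i := fun _ _ hmn =>
    Finset.sum_le_sum_of_subset_of_nonneg (hu hmn) fun i _ _ => hf i
  have hsum : Summable f := summable_of_sum_le hf fun v => by
    obtain ⟨n, hn⟩ := (hu'.eventually (eventually_ge_atTop v)).exists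
    exact (Finset.sum_le_sum_of_subset_of_nonneg hn fun i _ _ => hf i).trans
      (hmono.ge_of_tendsto h n)
  rw [← tendsto_nhds_unique (hsum.hasSum.comp hu') h]
  exact hsum.hasSum

noncomputable def wordsLE (Act : Type) [Fintype Act] : ℕ → Finset (List Act)
  | 0 => {[]}
  | n + 1 => insert [] ((Finset.univ ×ˢ wordsLE Act n).image fun x => x.1 :: x.2)

theorem mem_wordsLE : ∀ {n : ℕ} {t : List Act}, t ∈ wordsLE Act n ↔ t.length ≤ n
  | 0, t => by simp [wordsLE]
  | n + 1, [] => by simp [wordsLE]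
  | n + 1, a :: t => by simp [wordsLE, mem_wordsLE]

theorem monotone_wordsLE : Monotone (wordsLE Act) := fun _ _ hmn _ ht =>
  mem_wordsLE.2 ((mem_wordsLE.1 ht).trans hmn)

theorem sum_wordsLE_succ {β : Type*} [AddCommMonoid β] (n : ℕ) (f : List Act → β) :
    ∑ t ∈ wordsLE Act (n + 1), f t = f [] + ∑ a, ∑ t ∈ wordsLE Act n, f (a :: t) := by
  rw [wordsLE, Finset.sum_insert (by simp), Finset.sum_image (by simp [Prod.ext_iff]),
    Finset.sum_product]

namespace SDFA

/-- `M.survival s n` is the probability that a run from `s` performs at least `n` steps. -/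
def survival (M : SDFA S Act) : S → ℕ → ℝ
  | _, 0 => 1
  | s, n + 1 => ∑ a, M.p s a * M.survival (M.δ s a) n

variable (M : SDFA S Act)

@[simp] theorem survival_zero (s : S) : M.survival s 0 = 1 := rfl

theorem survival_succ (s : S) (n : ℕ) :
    M.survival s (n + 1) = ∑ a, M.p s a * M.survival (M.δ s a) n := rfl

@[simp] theorem pi_nil (s : S) : M.pi s [] = 1 - ∑ a, M.p s a := rfl

@[simp] theorem pi_cons (s : S) (a : Act) (w : List Act) :
    M.pi s (a :: w) = M.p s a * M.pi (M.δ s a) w := rfl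

theorem pi_nonneg : ∀ (s : S) (w : List Act), 0 ≤ M.pi s w
  | s, [] => sub_nonneg.2 (M.sum_le_one s)
  | s, a :: w => mul_nonneg (M.p_nonneg s a) (pi_nonneg _ w)

theorem survival_nonneg : ∀ (s : S) (n : ℕ), 0 ≤ M.survival s n
  | _, 0 => zero_le_one
  | s, n + 1 => Finset.sum_nonneg fun a _ =>
      mul_nonneg (M.p_nonneg s a) (survival_nonneg _ n)

theorem survival_succ_le : ∀ (s : S) (n : ℕ), M.survival s (n + 1) ≤ M.survival s n
  | s, 0 => by simpa [survival_succ] using M.sum_le_one s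
  | s, n + 1 => Finset.sum_le_sum fun a _ =>
      mul_le_mul_of_nonneg_left (survival_succ_le _ n) (M.p_nonneg s a)

theorem survival_antitone (s : S) : Antitone (M.survival s) :=
  antitone_nat_of_succ_le (M.survival_succ_le s)

theorem sum_pi_wordsLE (s : S) (n : ℕ) :
    ∑ t ∈ wordsLE Act n, M.pi s t = 1 - M.survival s (n + 1) := by
  induction n generalizing s with
  | zero => simp [wordsLE, survival_succ]
  | succ n ih =>
      simp only [sum_wordsLE_succ, pi_cons, ← Finset.mul_sum, ih, mul_sub, mul_one,
        Finset.sum_sub_distrib, pi_nil, M.survival_succ s (n + 1)]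
      ring

theorem pi_add_survival_length_succ_le_one (s : S) (w : List Act) :
    M.pi s w + M.survival s (w.length + 1) ≤ 1 := by
  have hw : M.pi s w ≤ ∑ t ∈ wordsLE Act w.length, M.pi s t :=
    Finset.single_le_sum (fun t _ => M.pi_nonneg s t) (mem_wordsLE.2 le_rfl)
  linarith [M.sum_pi_wordsLE s w.length]

theorem run_append : ∀ (s : S) (u v : List Act), M.run s (u ++ v) = M.run (M.run s u) v
  | _, [], _ => rfl
  | s, a :: u, v => run_append (M.δ s a) u v

theorem posWord_append : ∀ (s : S) (u v : List Act),
    M.posWord s (u ++ v) ↔ M.posWord s u ∧ M.posWord (M.run s u) v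
  | _, [], _ => ⟨fun h => ⟨trivial, h⟩, And.right⟩
  | s, a :: u, v => by
      simp only [List.cons_append, posWord, run, posWord_append (M.δ s a) u v, and_assoc]

theorem pi_pos_of_posWord : ∀ {s : S} {w : List Act},
    M.posWord s w → ∑ a, M.p (M.run s w) a < 1 → 0 < M.pi s w
  | _, [], _, hlt => sub_pos.2 hlt
  | _, _ :: _, hw, hlt => mul_pos hw.1 (pi_pos_of_posWord hw.2 hlt)

variable {M}

theorem Reach.refl (x : S) : M.Reach x x := ⟨[], trivial, rfl⟩

theorem Reach.step {x y : S} {a : Act} (h : M.Reach x y) (ha : 0 < M.p y a) :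
    M.Reach x (M.δ y a) := by
  obtain ⟨w, hw, rfl⟩ := h
  exact ⟨w ++ [a], (M.posWord_append x w [a]).2 ⟨hw, ha, trivial⟩, M.run_append x w [a]⟩

theorem Reach.exists_survival_lt_one {s s' : S} (h : M.Reach s s')
    (hs' : ∑ a, M.p s' a < 1) : ∃ n, M.survival s n < 1 := by
  obtain ⟨w, hw, rfl⟩ := h
  exact ⟨w.length + 1, by linarith [M.pi_pos_of_posWord hw hs',
    M.pi_add_survival_length_succ_le_one s w]⟩

theorem exists_survival_le_of_forall_exists_lt_one {P : S → Prop}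
    (h : ∀ s, P s → ∃ n, M.survival s n < 1) :
    ∃ K c, c < 1 ∧ ∀ s, P s → M.survival s K ≤ c := by
  have hK : ∀ᶠ K in atTop, ∀ s, P s → M.survival s K < 1 := by
    refine eventually_all.2 fun s => ?_
    by_cases hs : P s
    · obtain ⟨n, hn⟩ := h s hs
      exact (eventually_ge_atTop n).mono fun K hK _ => (M.survival_antitone s hK).trans_lt hn
    · exact Eventually.of_forall fun _ h => absurd h hs
  obtain ⟨K, hK⟩ := hK.exists
  have hc : ∀ᶠ c in 𝓝[<] (1 : ℝ), ∀ s, P s → M.survival s K ≤ c := by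
    refine eventually_all.2 fun s => ?_
    by_cases hs : P s
    · exact mem_of_superset (Ioo_mem_nhdsLT (hK s hs)) fun c hc _ => hc.1.le
    · exact Eventually.of_forall fun _ h => absurd h hs
  obtain ⟨c, hc, hc1⟩ := (hc.and self_mem_nhdsWithin).exists
  exact ⟨K, c, hc1, hc⟩

theorem survival_add_le_mul {x : S} {K : ℕ} {c : ℝ}
    (hK : ∀ y, M.Reach x y → M.survival y K ≤ c) :
    ∀ (n : ℕ) (y : S), M.Reach x y → M.survival y (n + K) ≤ c * M.survival y n
  | 0, y, hy => by simpa using hK y hy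
  | n + 1, y, hy => by
      rw [Nat.add_right_comm, survival_succ, survival_succ, Finset.mul_sum]
      refine Finset.sum_le_sum fun a _ => ?_
      -- a transition of probability `0` may leave the reachable states, but contributes `0`
      rcases (M.p_nonneg y a).eq_or_lt with h0 | hpos
      · simp [← h0]
      · rw [mul_left_comm]
        exact mul_le_mul_of_nonneg_left (survival_add_le_mul hK n _ (hy.step hpos)) hpos.le

theorem tendsto_survival_zero {x : S} {K : ℕ} {c : ℝ} (hc : c < 1)
    (hK : ∀ y, M.Reach x y → M.survival y K ≤ c) :
    Tendsto (M.survival x) atTop (𝓝 0) := by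
  obtain ⟨ℓ, hℓ⟩ : ∃ ℓ, Tendsto (M.survival x) atTop (𝓝 ℓ) :=
    ⟨_, tendsto_atTop_ciInf (M.survival_antitone x)
      ⟨0, Set.forall_mem_range.2 (M.survival_nonneg x)⟩⟩
  have hℓ0 : 0 ≤ ℓ := ge_of_tendsto' hℓ (M.survival_nonneg x)
  have hℓc : ℓ ≤ c * ℓ := le_of_tendsto_of_tendsto' ((tendsto_add_atTop_iff_nat K).2 hℓ)
    (hℓ.const_mul c) fun n => survival_add_le_mul hK n x (Reach.refl x)
  obtain rfl : ℓ = 0 := by nlinarith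
  exact hℓ

end SDFA

/-- If for every state `s` reachable from `s₀` via transitions of
positive probability there is a state `s'` reachable from `s` via transitions of
positive probability with `∑_{λ} p(s',λ) < 1`, then `∑_{t ∈ Σ*} L_A(t) = 1`,
i.e. `L_A` is a stochastic language (a probability distribution over traces). -/
theorem sdfa_lang_hasSum_one {S Act : Type} [Fintype S] [Fintype Act]
    (M : SDFA S Act)
    (h : ∀ s : S, M.Reach M.s0 s → ∃ s' : S, M.Reach s s' ∧ ∑ a, M.p s' a < 1) :
    HasSum M.lang 1 := by
  obtain ⟨K, c, hc, hK⟩ := M.exists_survival_le_of_forall_exists_lt_one fun s hs =>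
    let ⟨_, hss', hs'⟩ := h s hs
    hss'.exists_survival_lt_one hs'
  have hsurv := (tendsto_add_atTop_iff_nat 1).2 (SDFA.tendsto_survival_zero hc hK)
  refine hasSum_of_tendsto_sum_of_nonneg (M.pi_nonneg M.s0) monotone_wordsLE
    (fun t => ⟨t.length, mem_wordsLE.2 le_rfl⟩) ?_
  simp only [M.sum_pi_wordsLE]
  simpa using hsurv.const_sub 1
end

section
/- For every stochastic deterministic finite automaton A and every trace t ∈ Σ*, the stochastic language of A agrees with the stochastic language of its stochastic directed action graph: L_A(t) = L_{SDAG(A)}(t). -/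
open scoped Classical BigOperators

variable {S Act : Type} [Fintype S] [Fintype Act]

namespace SdagAux

variable {S Act : Type} [Fintype S] [Fintype Act]

/-- The state "at" a vertex: `s₀` at the input node, the target state at a node. -/
def stOf (M : SDFA S Act) : Vtx M.TransOf → S
  | Vtx.inp => M.s0
  | Vtx.out => M.s0
  | Vtx.node m => M.tgt m

/-- A list of transitions forms a valid path starting at state `s` and ending
at a state that can stop. -/
def okList (M : SDFA S Act) : S → List M.TransOf → Prop
  | s, [] => ∑ μ, M.p s μ < 1
  | s, n :: ns => n.1.1 = s ∧ okList M (M.tgt n) ns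

lemma gamma_node (M : SDFA S Act) (x : Vtx M.TransOf) (hx : x ≠ Vtx.out) (n : M.TransOf) :
    dagGamma M x (Vtx.node n) ↔ n.1.1 = stOf M x := by
  cases x with
  | inp => exact Iff.rfl
  | out => exact absurd rfl hx
  | node m => exact Iff.rfl

lemma gamma_out (M : SDFA S Act) (x : Vtx M.TransOf) (hx : x ≠ Vtx.out) :
    dagGamma M x Vtx.out ↔ ∑ μ, M.p (stOf M x) μ < 1 := by
  cases x with
  | inp => exact Iff.rfl
  | out => exact absurd rfl hx
  | node m => exact Iff.rfl

lemma q_node (M : SDFA S Act) (x : Vtx M.TransOf) (hx : x ≠ Vtx.out) (n : M.TransOf) :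
    dagQ M x (Vtx.node n) = if n.1.1 = stOf M x then M.p n.1.1 n.1.2 else 0 := by
  cases x with
  | inp => rfl
  | out => exact absurd rfl hx
  | node m => rfl

lemma q_out (M : SDFA S Act) (x : Vtx M.TransOf) (hx : x ≠ Vtx.out) :
    dagQ M x Vtx.out =
      if ∑ μ, M.p (stOf M x) μ < 1 then 1 - ∑ μ, M.p (stOf M x) μ else 0 := by
  cases x with
  | inp => rfl
  | out => exact absurd rfl hx
  | node m => rfl

lemma execProb_cons {N : Type} (q : Vtx N → Vtx N → ℝ) (a b : Vtx N) (l : List (Vtx N)) :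
    execProb q (a :: b :: l) = q a b * execProb q (b :: l) := by
  simp [execProb]

lemma execProb_single {N : Type} (q : Vtx N → Vtx N → ℝ) (a : Vtx N) :
    execProb q [a] = 1 := by
  simp [execProb]

lemma chain_iff_ok (M : SDFA S Act) :
    ∀ (ns : List M.TransOf) (x : Vtx M.TransOf), x ≠ Vtx.out →
      (List.Chain' (dagGamma M) (x :: ns.map Vtx.node ++ [Vtx.out]) ↔
        okList M (stOf M x) ns) := by
  intro ns
  induction ns with
  | nil =>
      intro x hx
      show List.Chain' (dagGamma M) [x, Vtx.out] ↔ _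
      simp only [List.Chain', List.isChain_pair]
      exact gamma_out M x hx
  | cons n ns ih =>
      intro x hx
      have h2 := ih (Vtx.node n) (by simp)
      simp only [List.map_cons, List.cons_append, List.Chain', List.isChain_cons_cons] at h2 ⊢
      rw [okList]
      constructor
      · rintro ⟨h1, h3⟩
        exact ⟨(gamma_node M x hx n).mp h1, h2.mp h3⟩
      · rintro ⟨h1, h3⟩
        exact ⟨(gamma_node M x hx n).mpr h1, h2.mpr h3⟩

lemma prob_eq (M : SDFA S Act) :
    ∀ (ns : List M.TransOf) (s : S) (x : Vtx M.TransOf), x ≠ Vtx.out → stOf M x = s →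
      okList M s ns →
      execProb (dagQ M) (x :: ns.map Vtx.node ++ [Vtx.out]) =
        M.pi s (ns.map fun n => n.1.2) := by
  intro ns
  induction ns with
  | nil =>
      intro s x hx hst hok
      rw [okList] at hok
      show execProb (dagQ M) (x :: Vtx.out :: []) = _
      rw [execProb_cons, execProb_single, q_out M x hx, hst, if_pos hok]
      simp [SDFA.pi, piFun]
  | cons n ns ih =>
      intro s x hx hst hok
      rw [okList] at hok
      obtain ⟨h1, h2⟩ := hok
      simp only [List.map_cons, List.cons_append]
      rw [execProb_cons, q_node M x hx n, hst, if_pos h1]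
      have := ih (M.tgt n) (Vtx.node n) (by simp) rfl h2
      simp only [List.cons_append] at this
      rw [this]
      have htgt : M.tgt n = M.δ s n.1.2 := by rw [← h1]; rfl
      simp only [SDFA.pi, piFun]
      rw [h1, htgt]

lemma ok_posWord (M : SDFA S Act) :
    ∀ (ns : List M.TransOf) (s : S), okList M s ns →
      M.posWord s (ns.map fun n => n.1.2) ∧
        ∑ μ, M.p (M.run s (ns.map fun n => n.1.2)) μ < 1 := by
  intro ns
  induction ns with
  | nil => intro s hok; exact ⟨trivial, hok⟩
  | cons n ns ih =>
      intro s hok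
      rw [okList] at hok
      obtain ⟨h1, h2⟩ := hok
      have := ih (M.tgt n) h2
      subst h1
      exact ⟨⟨n.2, this.1⟩, this.2⟩

lemma pi_zero_of_not_pos (M : SDFA S Act) :
    ∀ (t : List Act) (s : S), ¬ M.posWord s t → M.pi s t = 0 := by
  intro t
  induction t with
  | nil => intro s h; exact absurd trivial h
  | cons a t ih =>
      intro s h
      rw [SDFA.posWord] at h
      push_neg at h
      by_cases hp : 0 < M.p s a
      · have := ih (M.δ s a) (h hp)
        simp only [SDFA.pi, piFun] at this ⊢
        rw [this, mul_zero]
      · have : M.p s a = 0 := le_antisymm (not_lt.mp hp) (M.p_nonneg s a)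
        simp only [SDFA.pi, piFun]
        rw [this, zero_mul]

lemma pi_zero_of_sum_eq_one (M : SDFA S Act) :
    ∀ (t : List Act) (s : S), ¬ (∑ μ, M.p (M.run s t) μ < 1) → M.pi s t = 0 := by
  intro t
  induction t with
  | nil =>
      intro s h
      rw [SDFA.run] at h
      have : ∑ μ, M.p s μ = 1 := le_antisymm (M.sum_le_one s) (not_lt.mp h)
      simp [SDFA.pi, piFun, this]
  | cons a t ih =>
      intro s h
      have := ih (M.δ s a) h
      simp only [SDFA.pi, piFun] at this ⊢
      rw [this, mul_zero]

/-- The canonical list of transitions along a positive word. -/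
def transList (M : SDFA S Act) : (t : List Act) → (s : S) → M.posWord s t → List M.TransOf
  | [], _, _ => []
  | a :: t, s, h => ⟨(s, a), h.1⟩ :: transList M t (M.δ s a) h.2

lemma transList_map (M : SDFA S Act) :
    ∀ (t : List Act) (s : S) (h : M.posWord s t),
      (transList M t s h).map (fun n => n.1.2) = t := by
  intro t
  induction t with
  | nil => intro s h; rfl
  | cons a t ih =>
      intro s h
      simp only [transList, List.map_cons, List.cons.injEq, true_and]
      exact ih (M.δ s a) h.2

lemma transList_ok (M : SDFA S Act) :
    ∀ (t : List Act) (s : S) (h : M.posWord s t),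
      ∑ μ, M.p (M.run s t) μ < 1 → okList M s (transList M t s h) := by
  intro t
  induction t with
  | nil => intro s h hend; exact hend
  | cons a t ih =>
      intro s h hend
      rw [transList, okList]
      exact ⟨rfl, ih (M.δ s a) h.2 hend⟩

lemma ok_unique (M : SDFA S Act) :
    ∀ (ns₁ ns₂ : List M.TransOf) (s : S), okList M s ns₁ → okList M s ns₂ →
      (ns₁.map fun n => n.1.2) = (ns₂.map fun n => n.1.2) → ns₁ = ns₂ := by
  intro ns₁
  induction ns₁ with
  | nil =>
      intro ns₂ s _ _ hm
      cases ns₂ with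
      | nil => rfl
      | cons m ms => simp at hm
  | cons n ns ih =>
      intro ns₂ s h1 h2 hm
      cases ns₂ with
      | nil => simp at hm
      | cons m ms =>
          rw [okList] at h1 h2
          simp only [List.map_cons, List.cons.injEq] at hm
          have hnm : n = m := by
            apply Subtype.ext
            have : n.1.1 = m.1.1 := by rw [h1.1, h2.1]
            exact Prod.ext this hm.1
          subst hnm
          rw [ih ms (M.tgt n) h1.2 h2.2 hm.2]

lemma not_inp_mem (M : SDFA S Act) :
    ∀ (l : List (Vtx M.TransOf)) (v : Vtx M.TransOf),
      List.Chain' (dagGamma M) (v :: l) → Vtx.inp ∉ l := by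
  intro l
  induction l with
  | nil => intro v _; simp
  | cons w l ih =>
      intro v hc
      simp only [List.Chain', List.isChain_cons_cons] at hc
      have hw : w ≠ Vtx.inp := by
        rintro rfl
        cases v <;> exact hc.1
      simp only [List.mem_cons]
      rintro (rfl | h)
      · exact hw rfl
      · exact ih w hc.2 h

lemma tail_form (M : SDFA S Act) :
    ∀ (l : List (Vtx M.TransOf)), List.Chain' (dagGamma M) l →
      l.getLast? = some Vtx.out → Vtx.inp ∉ l →
      ∃ ns : List M.TransOf, l = ns.map Vtx.node ++ [Vtx.out] := by
  intro l
  induction l with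
  | nil => intro _ h _; simp at h
  | cons v l ih =>
      intro hc hlast hmem
      cases l with
      | nil =>
          simp only [List.getLast?_singleton, Option.some.injEq] at hlast
          exact ⟨[], by simp [hlast]⟩
      | cons w l' =>
          simp only [List.Chain', List.isChain_cons_cons] at hc
          have hvn : v ≠ Vtx.inp := fun h => hmem (by simp [h])
          have hvo : v ≠ Vtx.out := by
            rintro rfl
            exact hc.1
          obtain ⟨n, rfl⟩ : ∃ n, v = Vtx.node n := by
            cases v with
            | inp => exact absurd rfl hvn
            | out => exact absurd rfl hvo
            | node n => exact ⟨n, rfl⟩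
          have hlast' : (w :: l').getLast? = some Vtx.out := by
            rwa [List.getLast?_cons_cons] at hlast
          have hmem' : Vtx.inp ∉ (w :: l') := fun h => hmem (List.mem_cons_of_mem _ h)
          obtain ⟨ns, hns⟩ := ih hc.2 hlast' hmem'
          exact ⟨n :: ns, by simp [hns]⟩

lemma trace_eq (M : SDFA S Act) (ns : List M.TransOf) :
    execTrace (dagBeta M) (Vtx.inp :: ns.map Vtx.node ++ [Vtx.out])
      = ns.map fun n => n.1.2 := by
  simp only [execTrace, List.cons_append, List.filterMap_cons, List.filterMap_append,
    List.filterMap_map]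
  induction ns with
  | nil => rfl
  | cons n ns ih =>
      simp only [List.map_cons, List.filterMap_cons] at *
      rw [Function.comp] at *
      simpa [dagBeta] using ih

/-- Characterization of executions of `SDAG(A)` confirming `t`. -/
lemma exec_char (M : SDFA S Act) (t : List Act) (l : List (Vtx M.TransOf)) :
    (IsExec (dagGamma M) l ∧ execTrace (dagBeta M) l = t) ↔
      ∃ ns : List M.TransOf, l = Vtx.inp :: ns.map Vtx.node ++ [Vtx.out] ∧
        okList M M.s0 ns ∧ (ns.map fun n => n.1.2) = t := by
  constructor
  · rintro ⟨⟨hchain, hhead, hlast⟩, htrace⟩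
    obtain ⟨l', rfl⟩ : ∃ l', l = Vtx.inp :: l' := by
      cases l with
      | nil => simp at hhead
      | cons v l' =>
          simp only [List.head?_cons, Option.some.injEq] at hhead
          exact ⟨l', by rw [hhead]⟩
    have hmem : Vtx.inp ∉ l' := not_inp_mem M l' Vtx.inp hchain
    have hl'ne : l' ≠ [] := by rintro rfl; simp at hlast
    have hlast' : l'.getLast? = some Vtx.out := by
      cases l' with
      | nil => exact absurd rfl hl'ne
      | cons w l'' => rwa [List.getLast?_cons_cons] at hlast
    obtain ⟨ns, rfl⟩ := tail_form M l' (List.IsChain.tail hchain) hlast' hmem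
    refine ⟨ns, rfl, ?_, ?_⟩
    · have := (chain_iff_ok M ns Vtx.inp (by simp)).mp hchain
      exact this
    · rw [show (Vtx.inp :: (List.map Vtx.node ns ++ [Vtx.out]) : List (Vtx M.TransOf))
            = Vtx.inp :: List.map Vtx.node ns ++ [Vtx.out] from rfl, trace_eq] at htrace
      exact htrace
  · rintro ⟨ns, rfl, hok, hmap⟩
    refine ⟨⟨?_, rfl, ?_⟩, ?_⟩
    · exact (chain_iff_ok M ns Vtx.inp (by simp)).mpr hok
    · rw [show Vtx.inp :: ns.map Vtx.node ++ [Vtx.out]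
          = (Vtx.inp :: ns.map Vtx.node) ++ [Vtx.out] by simp,
        List.getLast?_concat]
    · rw [trace_eq, hmap]

end SdagAux

/-- For every SDFA `A` and every trace `t`, the stochastic language
of `A` agrees with the stochastic language of `SDAG(A)`: `L_A(t) = L_{SDAG(A)}(t)`. -/
theorem sdfa_lang_eq_sdag_lang {S Act : Type} [Fintype S] [Fintype Act]
    (M : SDFA S Act) (t : List Act) :
    M.lang t = gLang (dagGamma M) (dagQ M) (dagBeta M) t := by
  classical
  open SdagAux in
  by_cases hpos : M.posWord M.s0 t
  · by_cases hend : ∑ μ, M.p (M.run M.s0 t) μ < 1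
    · -- unique execution exists
      set ns := transList M t M.s0 hpos with hns
      have hok : okList M M.s0 ns := transList_ok M t M.s0 hpos hend
      have hmap : (ns.map fun n => n.1.2) = t := transList_map M t M.s0 hpos
      have hx : IsExec (dagGamma M) (Vtx.inp :: ns.map Vtx.node ++ [Vtx.out]) ∧
          execTrace (dagBeta M) (Vtx.inp :: ns.map Vtx.node ++ [Vtx.out]) = t :=
        (exec_char M t _).mpr ⟨ns, rfl, hok, hmap⟩
      let a : {l : List (Vtx M.TransOf) // IsExec (dagGamma M) l ∧
          execTrace (dagBeta M) l = t} := ⟨_, hx⟩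
      rw [gLang, tsum_eq_single a]
      · show M.lang t = execProb (dagQ M) (Vtx.inp :: ns.map Vtx.node ++ [Vtx.out])
        rw [prob_eq M ns M.s0 Vtx.inp (by simp) rfl hok, hmap]
        rfl
      · rintro ⟨l, hl⟩ hne
        exfalso
        apply hne
        obtain ⟨ms, rfl, hok', hmap'⟩ := (exec_char M t l).mp hl
        have : ms = ns := ok_unique M ms ns M.s0 hok' hok (by rw [hmap, hmap'])
        subst this
        rfl
    · -- no execution; L_A t = 0
      have hempty : IsEmpty {l : List (Vtx M.TransOf) // IsExec (dagGamma M) l ∧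
          execTrace (dagBeta M) l = t} := by
        constructor
        rintro ⟨l, hl⟩
        obtain ⟨ms, rfl, hok', hmap'⟩ := (exec_char M t l).mp hl
        have := (ok_posWord M ms M.s0 hok').2
        rw [hmap'] at this
        exact hend this
      haveI := hempty
      rw [gLang, tsum_empty]
      exact pi_zero_of_sum_eq_one M t M.s0 hend
  · have hempty : IsEmpty {l : List (Vtx M.TransOf) // IsExec (dagGamma M) l ∧
        execTrace (dagBeta M) l = t} := by
      constructor
      rintro ⟨l, hl⟩
      obtain ⟨ms, rfl, hok', hmap'⟩ := (exec_char M t l).mp hl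
      have := (ok_posWord M ms M.s0 hok').1
      rw [hmap'] at this
      exact hpos this
    haveI := hempty
    rw [gLang, tsum_empty]
    exact pi_zero_of_not_pos M t M.s0 hpos
end

section
/- For every deterministic stochastic directed action graph G and every trace t ∈ Σ*, the stochastic language of G agrees with the stochastic language of its stochastic finite automaton: L_G(t) = L_{SFA(G)}(t), where the partial transition function of SFA(G) is extended arbitrarily to a total function on pairs (x,λ) with p(x,λ) = 0 (the value of L_{SFA(G)} does not depend on this extension). -/
open scoped Classical BigOperators

variable {S Act : Type} [Fintype S] [Fintype Act]

section AuxForThm8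

variable {N Act : Type} [Fintype N] [Fintype Act]

lemma execProb_cons8 (q : Vtx N → Vtx N → ℝ) (x y : Vtx N) (l : List (Vtx N)) :
    execProb q (x :: y :: l) = q x y * execProb q (y :: l) := by
  simp [execProb]

lemma execTrace_node8 (β : N → Act) (n : N) (l : List (Vtx N)) :
    execTrace β (Vtx.node n :: l) = β n :: execTrace β l := by simp [execTrace]

lemma execTrace_inp8 (β : N → Act) (l : List (Vtx N)) :
    execTrace β (Vtx.inp :: l) = execTrace β l := by simp [execTrace]

lemma execTrace_out8 (β : N → Act) (l : List (Vtx N)) :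
    execTrace β (Vtx.out :: l) = execTrace β l := by simp [execTrace]

def vtxEquiv8 (N : Type) : Vtx N ≃ (N ⊕ Bool) where
  toFun v := match v with
    | Vtx.inp => Sum.inr true
    | Vtx.out => Sum.inr false
    | Vtx.node n => Sum.inl n
  invFun x := match x with
    | Sum.inr true => Vtx.inp
    | Sum.inr false => Vtx.out
    | Sum.inl n => Vtx.node n
  left_inv v := by cases v <;> rfl
  right_inv x := by rcases x with n | (_|_) <;> rfl

lemma sum_vtx8 (f : Vtx N → ℝ) :
    ∑ v : Vtx N, f v = f Vtx.inp + f Vtx.out + ∑ n : N, f (Vtx.node n) := by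
  rw [← Equiv.sum_comp (vtxEquiv8 N).symm f, Fintype.sum_sum_type, Fintype.sum_bool]
  simp only [vtxEquiv8, Equiv.coe_fn_symm_mk]
  ring

noncomputable def gLangFrom8 (γ : Vtx N → Vtx N → Prop) (q : Vtx N → Vtx N → ℝ)
    (β : N → Act) (x : Vtx N) (t : List Act) : ℝ :=
  ∑' l : {l : List (Vtx N) // (x :: l).Chain' γ ∧ l.getLast? = some Vtx.out ∧ execTrace β l = t},
    execProb q (x :: (l : List (Vtx N)))

lemma nil_decomp8 (G : SDAG N Act) (x : Vtx N) (l : List (Vtx N))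
    (hc : (x :: l).Chain' G.γ) (hl : l.getLast? = some Vtx.out)
    (ht : execTrace G.β l = ([] : List Act)) : l = [Vtx.out] ∧ G.γ x Vtx.out := by
  match l with
  | [] => simp at hl
  | Vtx.inp :: l' => exact absurd (List.isChain_cons_cons.mp hc).1 (G.no_into_inp x)
  | Vtx.node n :: l' => simp [execTrace] at ht
  | Vtx.out :: l' =>
    have hγ := (List.isChain_cons_cons.mp hc).1
    match l' with
    | [] => exact ⟨rfl, hγ⟩
    | w :: l'' =>
      exact absurd (List.isChain_cons_cons.mp (List.isChain_cons_cons.mp hc).2).1 (G.no_from_out w)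

lemma cons_decomp8 (G : SDAG N Act) (x : Vtx N) (a : Act) (t' : List Act)
    (l : List (Vtx N)) (hc : (x :: l).Chain' G.γ) (hl : l.getLast? = some Vtx.out)
    (ht : execTrace G.β l = a :: t') :
    ∃ m l', l = Vtx.node m :: l' ∧ G.γ x (Vtx.node m) ∧ G.β m = a ∧
      (Vtx.node m :: l').Chain' G.γ ∧ l'.getLast? = some Vtx.out ∧ execTrace G.β l' = t' := by
  match l with
  | [] => simp at hl
  | Vtx.inp :: l' => exact absurd (List.isChain_cons_cons.mp hc).1 (G.no_into_inp x)
  | Vtx.out :: l' =>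
    match l' with
    | [] => simp [execTrace] at ht
    | w :: l'' =>
      exact absurd (List.isChain_cons_cons.mp (List.isChain_cons_cons.mp hc).2).1 (G.no_from_out w)
  | Vtx.node m :: l' =>
    have hc' := List.isChain_cons_cons.mp hc
    have hβ : G.β m = a ∧ execTrace G.β l' = t' := by
      rw [execTrace_node8] at ht
      exact ⟨List.head_eq_of_cons_eq ht, List.tail_eq_of_cons_eq ht⟩
    refine ⟨m, l', rfl, hc'.1, hβ.1, hc'.2, ?_, hβ.2⟩
    match l' with
    | [] => simp at hl
    | w :: l'' => simpa using hl

lemma gLangFrom_nil8 (G : SDAG N Act) (x : Vtx N) :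
    gLangFrom8 G.γ G.q G.β x [] = G.q x Vtx.out := by
  by_cases hγ : G.γ x Vtx.out
  · have hb : ((x :: [Vtx.out] : List (Vtx N)).Chain' G.γ ∧
        ([Vtx.out] : List (Vtx N)).getLast? = some Vtx.out ∧
        execTrace G.β ([Vtx.out] : List (Vtx N)) = ([] : List Act)) := by
      refine ⟨?_, by simp, by simp [execTrace]⟩
      exact List.isChain_cons_cons.mpr ⟨hγ, by simp⟩
    rw [gLangFrom8, tsum_eq_single (⟨[Vtx.out], hb⟩ :
        {l : List (Vtx N) // (x :: l).Chain' G.γ ∧ l.getLast? = some Vtx.out ∧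
          execTrace G.β l = ([] : List Act)})]
    · simp [execProb]
    · intro b' hb'
      exfalso; apply hb'
      obtain ⟨h1, _⟩ := nil_decomp8 G x b'.1 b'.2.1 b'.2.2.1 b'.2.2.2
      exact Subtype.ext h1
  · have he : IsEmpty {l : List (Vtx N) // (x :: l).Chain' G.γ ∧ l.getLast? = some Vtx.out ∧
        execTrace G.β l = ([] : List Act)} :=
      ⟨fun b => hγ (nil_decomp8 G x b.1 b.2.1 b.2.2.1 b.2.2.2).2⟩
    rw [gLangFrom8, tsum_empty, G.q_eq_zero x Vtx.out hγ]

lemma sum_sfaP8 (G : SDAG N Act) (x : Vtx N) :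
    ∑ a : Act, sfaP G x a = ∑ n : N, G.q x (Vtx.node n) := by
  unfold sfaP
  rw [Finset.sum_comm]
  refine Finset.sum_congr rfl fun y _ => ?_
  by_cases hγ : G.γ x (Vtx.node y)
  · simp only [hγ, true_and]
    rw [Finset.sum_ite_eq Finset.univ (G.β y) (fun _ => G.q x (Vtx.node y))]
    simp
  · simp only [hγ, false_and, if_false, Finset.sum_const_zero]
    exact (G.q_eq_zero x (Vtx.node y) hγ).symm

lemma gLangFrom_eq8 (G : SDAG N Act) (hdet : G.IsDet) (δ : Vtx N → Act → Vtx N)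
    (hδ : ∀ (x : Vtx N) (a : Act) (y : N),
      G.γ x (Vtx.node y) → G.β y = a → δ x a = Vtx.node y) :
    ∀ (t : List Act) (x : Vtx N), x ≠ Vtx.out →
      gLangFrom8 G.γ G.q G.β x t = piFun δ (sfaP G) x t := by
  intro t
  induction t with
  | nil =>
    intro x hx
    rw [gLangFrom_nil8 G x]
    show G.q x Vtx.out = 1 - ∑ a, sfaP G x a
    have h1 := G.sum_q x hx
    rw [sum_vtx8] at h1
    have h2 : G.q x Vtx.inp = 0 := G.q_eq_zero x Vtx.inp (G.no_into_inp x)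
    rw [sum_sfaP8]
    linarith
  | cons a t' ih =>
    intro x hx
    by_cases hex : ∃ n, G.γ x (Vtx.node n) ∧ G.β n = a
    · obtain ⟨n, hγn, hβn⟩ := hex
      have hδn : δ x a = Vtx.node n := hδ x a n hγn hβn
      have hsfa : sfaP G x a = G.q x (Vtx.node n) := by
        unfold sfaP
        rw [Finset.sum_eq_single n]
        · simp [hγn, hβn]
        · intro y _ hy
          rw [if_neg]
          rintro ⟨hγy, hβy⟩
          exact hdet x hx y n hγy hγn hy (hβy.trans hβn.symm)
        · intro h; exact absurd (Finset.mem_univ n) h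
      have hA : ∀ l : List (Vtx N), (x :: l).Chain' G.γ → l.getLast? = some Vtx.out →
          execTrace G.β l = a :: t' →
          l = Vtx.node n :: l.tail ∧ ((Vtx.node n :: l.tail).Chain' G.γ ∧
            l.tail.getLast? = some Vtx.out ∧ execTrace G.β l.tail = t') := by
        intro l hc hl ht
        obtain ⟨m, l', heq, hγm, hβm, hc', hl', ht'⟩ := cons_decomp8 G x a t' l hc hl ht
        have hmn : m = n := by
          by_contra h
          exact hdet x hx m n hγm hγn h (hβm.trans hβn.symm)
        subst hmn
        subst heq
        exact ⟨rfl, hc', hl', ht'⟩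
      let e : {l' : List (Vtx N) // (Vtx.node n :: l').Chain' G.γ ∧
            l'.getLast? = some Vtx.out ∧ execTrace G.β l' = t'} ≃
          {l : List (Vtx N) // (x :: l).Chain' G.γ ∧
            l.getLast? = some Vtx.out ∧ execTrace G.β l = a :: t'} :=
        { toFun := fun l' => ⟨Vtx.node n :: l'.1, by
            obtain ⟨h1, h2, h3⟩ := l'.2
            refine ⟨List.isChain_cons_cons.mpr ⟨hγn, h1⟩, ?_, by rw [execTrace_node8, hβn, h3]⟩
            match hl : l'.1 with
            | [] => rw [hl] at h2; simp at h2
            | w :: rest => rw [hl] at h2; simpa using h2⟩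
          invFun := fun l => ⟨l.1.tail, (hA l.1 l.2.1 l.2.2.1 l.2.2.2).2⟩
          left_inv := fun l' => Subtype.ext rfl
          right_inv := fun l => Subtype.ext ((hA l.1 l.2.1 l.2.2.1 l.2.2.2).1).symm }
      have key : gLangFrom8 G.γ G.q G.β x (a :: t') =
          G.q x (Vtx.node n) * gLangFrom8 G.γ G.q G.β (Vtx.node n) t' := by
        rw [gLangFrom8, ← Equiv.tsum_eq e (fun l => execProb G.q (x :: (l : List (Vtx N))))]
        rw [gLangFrom8, ← tsum_mul_left]
        exact tsum_congr fun l' => execProb_cons8 G.q x (Vtx.node n) l'.1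
      rw [key]
      show _ = sfaP G x a * piFun δ (sfaP G) (δ x a) t'
      rw [hsfa, hδn, ih (Vtx.node n) (by simp)]
    · push_neg at hex
      have hsfa : sfaP G x a = 0 := by
        unfold sfaP
        refine Finset.sum_eq_zero fun y _ => ?_
        rw [if_neg]
        rintro ⟨h1, h2⟩
        exact hex y h1 h2
      haveI : IsEmpty {l : List (Vtx N) // (x :: l).Chain' G.γ ∧
          l.getLast? = some Vtx.out ∧ execTrace G.β l = a :: t'} :=
        ⟨fun l => by
          obtain ⟨m, l', _, hγm, hβm, _⟩ := cons_decomp8 G x a t' l.1 l.2.1 l.2.2.1 l.2.2.2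
          exact hex m hγm hβm⟩
      rw [gLangFrom8, tsum_empty]
      show (0 : ℝ) = sfaP G x a * piFun δ (sfaP G) (δ x a) t'
      rw [hsfa, zero_mul]

lemma inp_decomp8 {γ : Vtx N → Vtx N → Prop} {β : N → Act} {t : List Act} (l : List (Vtx N))
    (h : IsExec γ l ∧ execTrace β l = t) :
    l = Vtx.inp :: l.tail ∧ ((Vtx.inp :: l.tail).Chain' γ ∧
      l.tail.getLast? = some Vtx.out ∧ execTrace β l.tail = t) := by
  obtain ⟨⟨hc, hh, hl⟩, ht⟩ := h
  match l with
  | [] => simp at hh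
  | v :: rest =>
    have hv : v = Vtx.inp := by simpa using hh
    subst hv
    refine ⟨rfl, hc, ?_, by simpa [execTrace_inp8] using ht⟩
    match rest with
    | [] => simp at hl
    | w :: rest' => simpa using hl

end AuxForThm8

/-- For every deterministic SDAG `G` and every trace `t`,
`L_G(t) = L_{SFA(G)}(t)`, where the partial transition function of `SFA(G)` is
extended arbitrarily to a total function (the value does not depend on the
extension, as it is universally quantified). -/
theorem det_sdag_lang_eq_sfa_lang {N Act : Type} [Fintype N] [Fintype Act]
    (G : SDAG N Act) (hdet : G.IsDet) (δ : Vtx N → Act → Vtx N)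
    (hδ : ∀ (x : Vtx N) (a : Act) (y : N),
      G.γ x (Vtx.node y) → G.β y = a → δ x a = Vtx.node y)
    (t : List Act) :
    G.lang t = piFun δ (sfaP G) Vtx.inp t := by
  have main := gLangFrom_eq8 G hdet δ hδ t Vtx.inp (by simp)
  rw [← main]
  show gLang G.γ G.q G.β t = gLangFrom8 G.γ G.q G.β Vtx.inp t
  rw [gLang, gLangFrom8]
  let e : {l : List (Vtx N) // (Vtx.inp :: l).Chain' G.γ ∧
        l.getLast? = some Vtx.out ∧ execTrace G.β l = t} ≃
      {l : List (Vtx N) // IsExec G.γ l ∧ execTrace G.β l = t} :=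
    { toFun := fun l => ⟨Vtx.inp :: l.1, by
        obtain ⟨h1, h2, h3⟩ := l.2
        refine ⟨⟨h1, by simp, ?_⟩, by rw [execTrace_inp8, h3]⟩
        match hl : l.1 with
        | [] => rw [hl] at h2; simp at h2
        | w :: rest => rw [hl] at h2; simpa using h2⟩
      invFun := fun l => ⟨l.1.tail, (inp_decomp8 l.1 l.2).2⟩
      left_inv := fun l => Subtype.ext rfl
      right_inv := fun l => Subtype.ext (inp_decomp8 l.1 l.2).1.symm }
  rw [← Equiv.tsum_eq e (fun l => execProb G.q (l : List (Vtx N)))]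
  rfl
end

section
/- For every stochastic directed action graph G (not necessarily deterministic), the family (L_G(t))_{t ∈ Σ*} indexed by all traces is summable and ∑_{t ∈ Σ*} L_G(t) ≤ 1; equivalently, the sum of the probabilities of all executions of G is at most 1. -/
open scoped Classical BigOperators

variable {S Act : Type} [Fintype S] [Fintype Act]

/-! ### Auxiliary material for Statement 10 -/

namespace SdagAux

instance {N : Type} : Inhabited (Vtx N) := ⟨Vtx.inp⟩

/-- Weight of a path continuation: product of `q` over consecutive pairs of `x :: l`. -/
def w {N : Type} (q : Vtx N → Vtx N → ℝ) : Vtx N → List (Vtx N) → ℝ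
  | _, [] => 1
  | x, y :: l => q x y * w q y l

lemma w_nonneg {N : Type} (q : Vtx N → Vtx N → ℝ) (hq : ∀ x y, 0 ≤ q x y) :
    ∀ (x : Vtx N) (l : List (Vtx N)), 0 ≤ w q x l
  | _, [] => zero_le_one
  | x, y :: l => mul_nonneg (hq x y) (w_nonneg q hq y l)

lemma execProb_eq_w {N : Type} (q : Vtx N → Vtx N → ℝ) :
    ∀ (l : List (Vtx N)) (x : Vtx N), execProb q (x :: l) = w q x l
  | [], x => by simp [execProb, w]
  | y :: l, x => by
      have h := execProb_eq_w q l y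
      simp only [execProb, w, List.tail_cons, List.zip_cons_cons, List.map_cons,
        List.prod_cons] at h ⊢
      rw [h]

lemma row_sum_le_one {N Act : Type} [Fintype N] [Fintype Act] (G : SDAG N Act)
    (x : Vtx N) : ∑ y, G.q x y ≤ 1 := by
  by_cases hx : x = Vtx.out
  · subst hx
    have h0 : ∀ y, G.q Vtx.out y = 0 := fun y => G.q_eq_zero _ _ (G.no_from_out y)
    simp [h0]
  · exact le_of_eq (G.sum_q x hx)

/-- Kraft-type inequality: the total weight of a prefix-free finite set of paths is `≤ 1`. -/
lemma key {N Act : Type} [Fintype N] [Fintype Act] (G : SDAG N Act) :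
    ∀ (n : ℕ) (x : Vtx N) (s : Finset (List (Vtx N))),
    (∀ l ∈ s, ∀ l' ∈ s, l <+: l' → l = l') →
    (∑ l ∈ s, l.length) < n →
    ∑ l ∈ s, w G.q x l ≤ 1 := by
  intro n
  induction n with
  | zero => intro x s _ h; exact absurd h (Nat.not_lt_zero _)
  | succ n ih =>
    intro x s hanti hlen
    rcases s.eq_empty_or_nonempty with rfl | hne
    · simp
    by_cases hnil : ([] : List (Vtx N)) ∈ s
    · have hs : s = {([] : List (Vtx N))} := by
        apply Finset.eq_singleton_iff_unique_mem.mpr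
        exact ⟨hnil, fun l hl => (hanti [] hnil l hl List.nil_prefix).symm⟩
      rw [hs]; simp [w]
    · have hpos : ∀ l ∈ s, l ≠ [] := fun l hl h => hnil (h ▸ hl)
      have hn1 : 1 ≤ n := by
        obtain ⟨l, hl⟩ := hne
        have h1 : 1 ≤ l.length := List.length_pos_iff.mpr (hpos l hl)
        have h2 : l.length ≤ ∑ l ∈ s, l.length :=
          Finset.single_le_sum (fun _ _ => Nat.zero_le _) hl
        omega
      have hslen : ∑ l ∈ s, l.length ≤ n := Nat.lt_succ_iff.mp hlen
      rw [← Finset.sum_fiberwise s (fun l => l.headI) (fun l => w G.q x l)]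
      have hcons : ∀ y : Vtx N, ∀ l ∈ s.filter (fun l => l.headI = y), l = y :: l.tail := by
        intro y l hl
        obtain ⟨hl1, hl2⟩ := Finset.mem_filter.mp hl
        rcases l with _ | ⟨c, t⟩
        · exact absurd rfl (hpos _ hl1)
        · subst hl2; rfl
      have hinj : ∀ y : Vtx N, ∀ a ∈ s.filter (fun l => l.headI = y),
          ∀ b ∈ s.filter (fun l => l.headI = y), a.tail = b.tail → a = b := by
        intro y a ha b hb hab
        rw [hcons y a ha, hcons y b hb, hab]
      calc ∑ y : Vtx N, ∑ l ∈ s.filter (fun l => l.headI = y), w G.q x l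
          = ∑ y : Vtx N, G.q x y *
              ∑ l' ∈ (s.filter (fun l => l.headI = y)).image List.tail, w G.q y l' := by
            refine Finset.sum_congr rfl fun y _ => ?_
            rw [Finset.sum_image (hinj y), Finset.mul_sum]
            refine Finset.sum_congr rfl fun l hl => ?_
            conv_lhs => rw [hcons y l hl]
            rfl
        _ ≤ ∑ y : Vtx N, G.q x y * 1 := by
            refine Finset.sum_le_sum fun y _ => ?_
            refine mul_le_mul_of_nonneg_left ?_ (G.q_nonneg x y)
            refine ih y _ ?_ ?_
            · intro a ha b hb hab
              obtain ⟨a', ha', rfl⟩ := Finset.mem_image.mp ha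
              obtain ⟨b', hb', rfl⟩ := Finset.mem_image.mp hb
              have hpre : a' <+: b' := by
                conv_lhs => rw [hcons y a' ha']
                conv_rhs => rw [hcons y b' hb']
                exact List.cons_prefix_cons.mpr ⟨rfl, hab⟩
              have := hanti a' (Finset.mem_filter.mp ha').1 b' (Finset.mem_filter.mp hb').1 hpre
              rw [this]
            · rcases (s.filter (fun l => l.headI = y)).eq_empty_or_nonempty with hemp | hfne
              · rw [hemp]; simp; omega
              · have hsum_im : ∑ l' ∈ (s.filter (fun l => l.headI = y)).image List.tail,
                    l'.length = ∑ l ∈ s.filter (fun l => l.headI = y), l.tail.length :=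
                  Finset.sum_image (hinj y)
                have htl : ∀ l ∈ s.filter (fun l => l.headI = y),
                    l.tail.length + 1 = l.length := by
                  intro l hl
                  conv_rhs => rw [hcons y l hl]
                  simp
                have h1 : ∑ l ∈ s.filter (fun l => l.headI = y), (l.tail.length + 1)
                    = ∑ l ∈ s.filter (fun l => l.headI = y), l.length :=
                  Finset.sum_congr rfl htl
                rw [Finset.sum_add_distrib] at h1
                have hcard : 1 ≤ (s.filter (fun l => l.headI = y)).card :=
                  Finset.Nonempty.card_pos hfne
                have h2 : ∑ l ∈ s.filter (fun l => l.headI = y), l.length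
                    ≤ ∑ l ∈ s, l.length :=
                  Finset.sum_le_sum_of_subset (Finset.filter_subset _ _)
                simp only [Finset.sum_const, smul_eq_mul, mul_one] at h1
                omega
        _ ≤ 1 := by
            simp only [mul_one]
            exact row_sum_le_one G x

lemma exec_shape {N : Type} {γ : Vtx N → Vtx N → Prop} {l : List (Vtx N)}
    (h : IsExec γ l) : l = Vtx.inp :: l.tail := by
  rcases l with _ | ⟨c, t⟩
  · exact absurd h.2.1 (by simp)
  · have hc : c = Vtx.inp := by
      have := h.2.1
      simpa using this
    rw [hc]; rfl

lemma exec_prefix_eq {N Act : Type} [Fintype N] [Fintype Act] (G : SDAG N Act)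
    {a b : List (Vtx N)} (ha : IsExec G.γ a) (hb : IsExec G.γ b) (h : a <+: b) : a = b := by
  obtain ⟨r, rfl⟩ := h
  rcases r with _ | ⟨z, r⟩
  · simp
  · exfalso
    have hch := hb.1
    unfold List.Chain' at hch; rw [List.isChain_append] at hch
    have hγ : G.γ Vtx.out z := hch.2.2 _ ha.2.2 z rfl
    exact G.no_from_out z hγ

lemma exec_sum_le {N Act : Type} [Fintype N] [Fintype Act] (G : SDAG N Act)
    (u : Finset {l : List (Vtx N) // IsExec G.γ l}) :
    ∑ l ∈ u, execProb G.q (l : List (Vtx N)) ≤ 1 := by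
  classical
  have hinj : ∀ a ∈ u, ∀ b ∈ u, a.1.tail = b.1.tail → a = b := by
    intro a _ b _ h
    exact Subtype.ext (by rw [exec_shape a.2, exec_shape b.2, h])
  have heq : ∑ t ∈ u.image (fun l => l.1.tail), w G.q Vtx.inp t
      = ∑ l ∈ u, execProb G.q l.1 := by
    rw [Finset.sum_image hinj]
    refine Finset.sum_congr rfl fun l _ => ?_
    conv_rhs => rw [exec_shape l.2]
    exact (execProb_eq_w G.q _ _).symm
  rw [← heq]
  refine key G ((∑ t ∈ u.image (fun l => l.1.tail), t.length) + 1) Vtx.inp _ ?_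
    (Nat.lt_succ_self _)
  intro a ha b hb hab
  obtain ⟨a', _, rfl⟩ := Finset.mem_image.mp ha
  obtain ⟨b', _, rfl⟩ := Finset.mem_image.mp hb
  have hpre : a'.1 <+: b'.1 := by
    conv_lhs => rw [exec_shape a'.2]
    conv_rhs => rw [exec_shape b'.2]
    exact List.cons_prefix_cons.mpr ⟨rfl, hab⟩
  rw [exec_prefix_eq G a'.2 b'.2 hpre]

/-- Fibers of the trace map on executions. -/
def sfam {N Act : Type} [Fintype N] [Fintype Act] (G : SDAG N Act) (t : List Act) :
    Set {l : List (Vtx N) // IsExec G.γ l} :=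
  {l | execTrace G.β (l : List (Vtx N)) = t}

/-- Explicit equivalence between the sigma type of trace fibers and all executions. -/
def sigEquiv {N Act : Type} [Fintype N] [Fintype Act] (G : SDAG N Act) :
    (Σ t : List Act, ↥(sfam G t)) ≃ {l : List (Vtx N) // IsExec G.γ l} where
  toFun p := p.2.1
  invFun l := ⟨execTrace G.β (l : List (Vtx N)), ⟨l, rfl⟩⟩
  left_inv p := by
    rcases p with ⟨t, l, hl⟩
    have ht : execTrace G.β (l : List (Vtx N)) = t := hl
    subst ht
    rfl
  right_inv l := rfl

end SdagAux

set_option maxHeartbeats 1000000 in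
/-- For every SDAG `G` (not necessarily deterministic), the family
`(L_G(t))_{t ∈ Σ*}` is summable with `∑_{t} L_G(t) ≤ 1`; equivalently, the sum of
the probabilities of all executions of `G` is at most `1`. -/
theorem sdag_lang_summable_and_tsum_le_one {N Act : Type} [Fintype N] [Fintype Act]
    (G : SDAG N Act) :
    (Summable G.lang ∧ ∑' t : List Act, G.lang t ≤ 1) ∧
    (Summable (fun l : {l : List (Vtx N) // IsExec G.γ l} =>
        execProb G.q (l : List (Vtx N))) ∧
      ∑' l : {l : List (Vtx N) // IsExec G.γ l}, execProb G.q (l : List (Vtx N)) ≤ 1) := by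
  classical
  set f : {l : List (Vtx N) // IsExec G.γ l} → ℝ :=
    fun l => execProb G.q (l : List (Vtx N)) with hfdef
  have hnn : ∀ l : {l : List (Vtx N) // IsExec G.γ l}, 0 ≤ f l := by
    intro l
    have h := SdagAux.exec_shape l.2
    show 0 ≤ execProb G.q (l : List (Vtx N))
    rw [h, SdagAux.execProb_eq_w]
    exact SdagAux.w_nonneg G.q G.q_nonneg _ _
  have hsum : ∀ u : Finset {l : List (Vtx N) // IsExec G.γ l}, ∑ l ∈ u, f l ≤ 1 :=
    fun u => SdagAux.exec_sum_le G u
  have hS : Summable f := summable_of_sum_le hnn hsum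
  have hT : ∑' l : {l : List (Vtx N) // IsExec G.γ l}, f l ≤ 1 := hS.tsum_le_of_sum_le hsum
  refine ⟨?_, hS, hT⟩
  -- Part 1: the stochastic language.
  have hsp : ∀ l : {l : List (Vtx N) // IsExec G.γ l}, ∃! t, l ∈ SdagAux.sfam G t :=
    fun l => ⟨execTrace G.β (l : List (Vtx N)), rfl, fun t ht => ht.symm⟩
  have hpart := (summable_partition hnn hsp).mp hS
  -- the language equals the fiberwise sums
  have hlang : ∀ t : List Act, G.lang t = ∑' i : SdagAux.sfam G t, f i := by
    intro t
    simp only [hfdef]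
    exact Equiv.tsum_eq
      (⟨fun l => ⟨⟨l.1, l.2.1⟩, l.2.2⟩, fun l => ⟨l.1.1, l.1.2, l.2⟩,
        fun _ => rfl, fun _ => rfl⟩ :
        {l : List (Vtx N) // IsExec G.γ l ∧ execTrace G.β l = t} ≃ ↥(SdagAux.sfam G t))
      (fun i : ↥(SdagAux.sfam G t) => execProb G.q ((i : {l : List (Vtx N) // IsExec G.γ l}) :
        List (Vtx N)))
  have hlang' : G.lang = fun t => ∑' i : SdagAux.sfam G t, f i := funext hlang
  constructor
  · rw [hlang']; exact hpart.2
  · rw [hlang']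
    have hsig := (SdagAux.sigEquiv G).summable_iff.mpr hS
    have h1 := Summable.tsum_sigma hsig
    have h2 := (SdagAux.sigEquiv G).tsum_eq f
    calc ∑' t, ∑' i : SdagAux.sfam G t, f i
        = ∑' t, ∑' i : SdagAux.sfam G t, (f ∘ (SdagAux.sigEquiv G)) ⟨t, i⟩ :=
          tsum_congr fun t => tsum_congr fun i => rfl
      _ = ∑' p : Σ t, ↥(SdagAux.sfam G t), (f ∘ (SdagAux.sigEquiv G)) p := h1.symm
      _ = ∑' l : {l : List (Vtx N) // IsExec G.γ l}, f l := by
          rw [show (∑' p : Σ t, ↥(SdagAux.sfam G t), (f ∘ (SdagAux.sigEquiv G)) p)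
              = ∑' p : Σ t, ↥(SdagAux.sfam G t), f (SdagAux.sigEquiv G p) from
            tsum_congr fun p => rfl]
          exact h2
      _ ≤ 1 := hT
end

section
/- Let A = (S, Σ, δ, p, s₀) be a stochastic deterministic finite automaton such that every state of S is reachable from s₀ via transitions of positive probability, and from every state s there is a state s' reachable from s via transitions of positive probability (possibly s' = s) with ∑_{λ∈Σ} p(s',λ) < 1. Then SDAG(A) is sound: every node of SDAG(A) lies on a directed walk along arcs of γ from the input node i to the output node o. -/
open scoped Classical BigOperators

variable {S Act : Type} [Fintype S] [Fintype Act]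

lemma my_getLast?_cons {α : Type*} (a : α) {l : List α} (h : l ≠ []) :
    (a :: l).getLast? = l.getLast? := by
  cases l with
  | nil => exact absurd rfl h
  | cons b t => simp [List.getLast?_cons_cons]

lemma my_getLast?_suffix {α : Type*} {l₁ l₂ : List α} (h : l₁ <:+ l₂) (hne : l₁ ≠ []) :
    l₂.getLast? = l₁.getLast? := by
  obtain ⟨t, rfl⟩ := h
  exact List.getLast?_append_of_ne_nil t hne

lemma sdag_suffix_ex {S Act : Type} [Fintype S] [Fintype Act] (M : SDFA S Act) :
    ∀ (w : List Act) (s : S), M.posWord s w → ∑ a, M.p (M.run s w) a < 1 →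
    ∃ L : List (Vtx M.TransOf), L.Chain' (dagGamma M) ∧ L.getLast? = some Vtx.out ∧
      ((L.head? = some Vtx.out ∧ ∑ a, M.p s a < 1) ∨
        ∃ m : M.TransOf, L.head? = some (Vtx.node m) ∧ m.1.1 = s) := by
  intro w
  induction w with
  | nil =>
      intro s _ hsum
      exact ⟨[Vtx.out], List.isChain_singleton _, rfl, Or.inl ⟨rfl, hsum⟩⟩
  | cons a w ih =>
      intro s hw hsum
      obtain ⟨hpos, hw'⟩ := hw
      obtain ⟨L, hchain, hlast, hhead⟩ := ih (M.δ s a) hw' hsum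
      refine ⟨Vtx.node ⟨(s, a), hpos⟩ :: L, ?_, ?_, Or.inr ⟨⟨(s, a), hpos⟩, rfl, rfl⟩⟩
      · simp only [List.Chain', List.isChain_cons]
        refine ⟨?_, hchain⟩
        intro y hy
        rcases hhead with ⟨h1, h2⟩ | ⟨m, h1, h2⟩
        · rw [h1] at hy; cases hy
          exact h2
        · rw [h1] at hy; cases hy
          exact h2
      · have : L ≠ [] := by
          intro h; rw [h] at hlast; simp at hlast
        rw [my_getLast?_cons _ this]
        exact hlast

lemma sdag_prefix_ex {S Act : Type} [Fintype S] [Fintype Act] (M : SDFA S Act) :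
    ∀ (w : List Act) (s : S), M.posWord s w →
    ∀ tail : List (Vtx M.TransOf),
      (∃ m : M.TransOf, tail.head? = some (Vtx.node m) ∧ m.1.1 = M.run s w) →
      tail.Chain' (dagGamma M) →
      ∃ L : List (Vtx M.TransOf), L.Chain' (dagGamma M) ∧
        (∃ m : M.TransOf, L.head? = some (Vtx.node m) ∧ m.1.1 = s) ∧
        tail <:+ L := by
  intro w
  induction w with
  | nil =>
      intro s _ tail htail hchain
      exact ⟨tail, hchain, htail, List.suffix_refl _⟩
  | cons a w ih =>
      intro s hw tail htail hchain
      obtain ⟨hpos, hw'⟩ := hw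
      obtain ⟨L, hchain', ⟨m, hhead, hsrc⟩, hsuff⟩ := ih (M.δ s a) hw' tail htail hchain
      refine ⟨Vtx.node ⟨(s, a), hpos⟩ :: L, ?_, ⟨⟨(s, a), hpos⟩, rfl, rfl⟩, hsuff.trans (List.suffix_cons _ _)⟩
      simp only [List.Chain', List.isChain_cons]
      refine ⟨?_, hchain'⟩
      intro y hy
      rw [hhead] at hy; cases hy
      exact hsrc

/-- If every state of `S` is reachable from `s₀` via transitions of
positive probability, and from every state `s` some state `s'` with
`∑_{λ} p(s',λ) < 1` is reachable via transitions of positive probability, then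
`SDAG(A)` is sound: every node lies on a directed walk along arcs of `γ` from the
input node to the output node. -/
theorem sdag_of_sdfa_sound {S Act : Type} [Fintype S] [Fintype Act]
    (M : SDFA S Act)
    (hreach : ∀ s : S, M.Reach M.s0 s)
    (hterm : ∀ s : S, ∃ s' : S, M.Reach s s' ∧ ∑ a, M.p s' a < 1) :
    ∀ n : M.TransOf, ∃ l : List (Vtx M.TransOf),
      IsExec (dagGamma M) l ∧ Vtx.node n ∈ l := by
  intro n
  obtain ⟨w1, hw1, hr1⟩ := hreach n.1.1
  obtain ⟨s', ⟨w2, hw2, hr2⟩, hsum⟩ := hterm (M.tgt n)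
  obtain ⟨T, hTchain, hTlast, hThead⟩ :=
    sdag_suffix_ex M w2 (M.tgt n) hw2 (hr2 ▸ hsum)
  -- tail = node n :: T
  have htailchain : (Vtx.node n :: T).Chain' (dagGamma M) := by
    simp only [List.Chain', List.isChain_cons]
    refine ⟨?_, hTchain⟩
    intro y hy
    rcases hThead with ⟨h1, h2⟩ | ⟨m, h1, h2⟩
    · rw [h1] at hy; cases hy
      exact h2
    · rw [h1] at hy; cases hy
      exact h2
  obtain ⟨L, hLchain, ⟨m, hLhead, hmsrc⟩, hsuff⟩ :=
    sdag_prefix_ex M w1 M.s0 hw1 (Vtx.node n :: T)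
      ⟨n, rfl, hr1.symm⟩ htailchain
  have hTne : T ≠ [] := by
    intro h; rw [h] at hTlast; simp at hTlast
  have htne : (Vtx.node n :: T) ≠ [] := by simp
  have hLlast : L.getLast? = some Vtx.out := by
    rw [my_getLast?_suffix hsuff htne, my_getLast?_cons _ hTne]
    exact hTlast
  have hLne : L ≠ [] := by
    intro h; rw [h] at hLlast; simp at hLlast
  refine ⟨Vtx.inp :: L, ⟨?_, rfl, ?_⟩, ?_⟩
  · simp only [List.Chain', List.isChain_cons]
    refine ⟨?_, hLchain⟩
    intro y hy
    rw [hLhead] at hy; cases hy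
    exact hmsrc
  · rw [my_getLast?_cons _ hLne]
    exact hLlast
  · exact List.mem_cons_of_mem _ (hsuff.subset List.mem_cons_self)
end

section
/- Let G = (N, Σ, β, γ, q, i, o) be a stochastic directed action graph with two distinct nodes n₁ ≠ n₂ such that β(n₁) = β(n₂). Let G' be obtained from G by removing n₁ and n₂, adding a fresh node n with label β(n₁), replacing every arc (x, n_j) by (x, n) and every arc (n_j, y) by (n, y) for j ∈ {1,2} (arcs among n₁, n₂ becoming the self-loop (n,n)), adding the probabilities of arcs that thereby become parallel, and halving the resulting probability of every outgoing arc of n. Then G' is again a stochastic directed action graph; in particular, for every node m of G' (including i), the flow probabilities of the outgoing arcs of m sum to exactly 1. -/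
open scoped Classical BigOperators

variable {S Act : Type} [Fintype S] [Fintype Act]

/-- The node set after merging two equally-labeled nodes `n₁, n₂`: the remaining
nodes together with a fresh node (`none`). -/
abbrev MergedN {N : Type} (n₁ n₂ : N) : Type := Option {m : N // m ≠ n₁ ∧ m ≠ n₂}

/-- The rerouting map from old vertices to new vertices: `n₁` and `n₂` are both
sent to the fresh node, all other vertices are kept. -/
def mergeMap {N : Type} [DecidableEq N] (n₁ n₂ : N) : Vtx N → Vtx (MergedN n₁ n₂)
  | Vtx.inp => Vtx.inp
  | Vtx.out => Vtx.out
  | Vtx.node m =>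
      if hm : m ≠ n₁ ∧ m ≠ n₂ then Vtx.node (some ⟨m, hm⟩) else Vtx.node none

/-- Labeling after the merge: the fresh node gets the label `β(n₁)`. -/
def mergeBeta {N Act : Type} [Fintype N] [Fintype Act]
    (G : SDAG N Act) (n₁ n₂ : N) : MergedN n₁ n₂ → Act
  | none => G.β n₁
  | some m => G.β m.1

/-- Flow relation after the merge: every arc `(x,n_j)` is replaced by `(x,n)` and
every arc `(n_j,y)` by `(n,y)` (arcs among `n₁,n₂` becoming the self-loop). -/
def mergeGamma {N Act : Type} [Fintype N] [Fintype Act] [DecidableEq N]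
    (G : SDAG N Act) (n₁ n₂ : N) (x' y' : Vtx (MergedN n₁ n₂)) : Prop :=
  ∃ x y : Vtx N, G.γ x y ∧ mergeMap n₁ n₂ x = x' ∧ mergeMap n₁ n₂ y = y'

/-- Flow probabilities after the merge: probabilities of arcs becoming parallel
are added, and the resulting probability of every outgoing arc of the fresh node
is halved. -/
noncomputable def mergeQ {N Act : Type} [Fintype N] [Fintype Act] [DecidableEq N]
    (G : SDAG N Act) (n₁ n₂ : N) (x' y' : Vtx (MergedN n₁ n₂)) : ℝ :=
  (∑ x : Vtx N, ∑ y : Vtx N,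
      if mergeMap n₁ n₂ x = x' ∧ mergeMap n₁ n₂ y = y' then G.q x y else 0) *
    (if x' = Vtx.node none then 1 / 2 else 1)


lemma Vtx.sum_univ {N : Type} [Fintype N] {M : Type} [AddCommMonoid M] (f : Vtx N → M) :
    ∑ v, f v = f .inp + f .out + ∑ n, f (.node n) := by
  let e : (Unit ⊕ Unit ⊕ N) ≃ Vtx N :=
    { toFun := fun x => match x with
        | .inl _ => .inp | .inr (.inl _) => .out | .inr (.inr n) => .node n
      invFun := fun v => match v with
        | .inp => .inl () | .out => .inr (.inl ()) | .node n => .inr (.inr n)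
      left_inv := by rintro (⟨⟩|⟨⟩|n) <;> rfl
      right_inv := by rintro (_|_|n) <;> rfl }
  rw [← e.sum_comp f, Fintype.sum_sum_type, Fintype.sum_sum_type]
  simp [e, add_assoc]

lemma mergeMap_eq_out {N : Type} [DecidableEq N] (n₁ n₂ : N) (x : Vtx N) :
    mergeMap n₁ n₂ x = Vtx.out ↔ x = Vtx.out := by
  cases x <;> simp [mergeMap]
  split_ifs <;> simp

lemma mergeMap_eq_inp {N : Type} [DecidableEq N] (n₁ n₂ : N) (x : Vtx N) :
    mergeMap n₁ n₂ x = Vtx.inp ↔ x = Vtx.inp := by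
  cases x <;> simp [mergeMap]
  split_ifs <;> simp

lemma preimage_count {N : Type} [Fintype N] [DecidableEq N] (n₁ n₂ : N) (hne : n₁ ≠ n₂)
    (x' : Vtx (MergedN n₁ n₂)) (hx' : x' ≠ Vtx.out) :
    (∑ x : Vtx N, if mergeMap n₁ n₂ x = x' then (1:ℝ) else 0) =
      if x' = Vtx.node none then 2 else 1 := by
  rw [Vtx.sum_univ]
  match x' with
  | Vtx.inp =>
      simp only [mergeMap]
      have : ∀ n : N, (if (if hm : n ≠ n₁ ∧ n ≠ n₂ then (Vtx.node (some ⟨n, hm⟩) : Vtx (MergedN n₁ n₂)) else Vtx.node none) = Vtx.inp then (1:ℝ) else 0) = 0 := by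
        intro n; split_ifs with h1 h2 h3 <;> simp_all
      simp [this]
  | Vtx.out => exact absurd rfl hx'
  | Vtx.node none =>
      simp only [mergeMap]
      have : ∀ n : N, (if (if hm : n ≠ n₁ ∧ n ≠ n₂ then (Vtx.node (some ⟨n, hm⟩) : Vtx (MergedN n₁ n₂)) else Vtx.node none) = Vtx.node none then (1:ℝ) else 0) =
          (if n = n₁ then (1:ℝ) else 0) + (if n = n₂ then (1:ℝ) else 0) := by
        intro n
        by_cases h1 : n = n₁ <;> by_cases h2 : n = n₂ <;> simp_all [hne]
      erw [Finset.sum_congr rfl (fun n _ => this n), Finset.sum_add_distrib]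
      simp [Finset.sum_ite_eq']
      norm_num
  | Vtx.node (some ⟨m, hm⟩) =>
      simp only [mergeMap]
      have : ∀ n : N, (if (if h : n ≠ n₁ ∧ n ≠ n₂ then (Vtx.node (some ⟨n, h⟩) : Vtx (MergedN n₁ n₂)) else Vtx.node none) = Vtx.node (some ⟨m, hm⟩) then (1:ℝ) else 0) =
          if n = m then (1:ℝ) else 0 := by
        intro n
        split_ifs with h1 h2 h3 h4 <;> simp_all
      simp [this, hm.1, hm.2]

lemma sum_mergeQ {N Act : Type} [Fintype N] [Fintype Act] [DecidableEq N]
    (G : SDAG N Act) (n₁ n₂ : N) (hne : n₁ ≠ n₂)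
    (x' : Vtx (MergedN n₁ n₂)) (hx' : x' ≠ Vtx.out) :
    ∑ y', mergeQ G n₁ n₂ x' y' = 1 := by
  unfold mergeQ
  rw [← Finset.sum_mul]
  have h1 : (∑ y' : Vtx (MergedN n₁ n₂), ∑ x : Vtx N, ∑ y : Vtx N,
      if mergeMap n₁ n₂ x = x' ∧ mergeMap n₁ n₂ y = y' then G.q x y else 0)
      = ∑ x : Vtx N, if mergeMap n₁ n₂ x = x' then (1:ℝ) else 0 := by
    rw [Finset.sum_comm]
    refine Finset.sum_congr rfl fun x _ => ?_
    rw [Finset.sum_comm]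
    by_cases hx : mergeMap n₁ n₂ x = x'
    · have hxo : x ≠ Vtx.out := by
        intro h; subst h; exact hx' (hx ▸ rfl)
      have h2 : ∀ y : Vtx N, (∑ y', if mergeMap n₁ n₂ x = x' ∧ mergeMap n₁ n₂ y = y'
          then G.q x y else 0) = G.q x y := by
        intro y; simp [hx, Finset.sum_ite_eq]
      rw [Finset.sum_congr rfl fun y _ => h2 y, G.sum_q x hxo, if_pos hx]
    · simp [hx]
  rw [h1, preimage_count n₁ n₂ hne x' hx']
  split_ifs <;> norm_num

lemma mergeQ_nonneg {N Act : Type} [Fintype N] [Fintype Act] [DecidableEq N]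
    (G : SDAG N Act) (n₁ n₂ : N) (x' y' : Vtx (MergedN n₁ n₂)) :
    0 ≤ mergeQ G n₁ n₂ x' y' := by
  unfold mergeQ
  apply mul_nonneg
  · refine Finset.sum_nonneg fun x _ => Finset.sum_nonneg fun y _ => ?_
    split_ifs
    · exact G.q_nonneg x y
    · exact le_rfl
  · split_ifs <;> norm_num

lemma mergeQ_out {N Act : Type} [Fintype N] [Fintype Act] [DecidableEq N]
    (G : SDAG N Act) (n₁ n₂ : N) (y' : Vtx (MergedN n₁ n₂)) :
    mergeQ G n₁ n₂ Vtx.out y' = 0 := by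
  unfold mergeQ
  have : ∀ x y : Vtx N, (if mergeMap n₁ n₂ x = Vtx.out ∧ mergeMap n₁ n₂ y = y'
      then G.q x y else 0) = 0 := by
    intro x y
    split_ifs with h
    · rw [(mergeMap_eq_out n₁ n₂ x).mp h.1]
      exact G.q_eq_zero _ _ (G.no_from_out y)
    · rfl
  simp [this]

/-- Merging two distinct equally-labeled nodes of an SDAG `G`
(rerouting arcs to a fresh node, adding probabilities of arcs that become
parallel, and halving the probabilities of the outgoing arcs of the fresh node)
again yields an SDAG; in particular, for every node of `G'` (including the input
node) the flow probabilities on its outgoing arcs sum to exactly `1`. -/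
theorem merge_step_wellDefined {N Act : Type} [Fintype N] [Fintype Act] [DecidableEq N]
    (G : SDAG N Act) (n₁ n₂ : N) (hne : n₁ ≠ n₂) (hβ : G.β n₁ = G.β n₂) :
    (∀ x' : Vtx (MergedN n₁ n₂), x' ≠ Vtx.out → ∑ y', mergeQ G n₁ n₂ x' y' = 1) ∧
    ∃ G' : SDAG (MergedN n₁ n₂) Act,
      G'.β = mergeBeta G n₁ n₂ ∧ G'.γ = mergeGamma G n₁ n₂ ∧ G'.q = mergeQ G n₁ n₂ := by
  constructor
  · exact fun x' hx' => sum_mergeQ G n₁ n₂ hne x' hx'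
  · refine ⟨⟨mergeBeta G n₁ n₂, mergeGamma G n₁ n₂, mergeQ G n₁ n₂,
      mergeQ_nonneg G n₁ n₂, ?_, ?_, ?_, ?_,
      fun x' hx' => sum_mergeQ G n₁ n₂ hne x' hx'⟩, rfl, rfl, rfl⟩
    · intro x' y'
      by_cases hx' : x' = Vtx.out
      · subst hx'; rw [mergeQ_out]; norm_num
      · calc mergeQ G n₁ n₂ x' y' ≤ ∑ z', mergeQ G n₁ n₂ x' z' :=
              Finset.single_le_sum (fun z' _ => mergeQ_nonneg G n₁ n₂ x' z')
                (Finset.mem_univ y')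
          _ = 1 := sum_mergeQ G n₁ n₂ hne x' hx'
    · intro x' y' hγ
      unfold mergeQ
      have : ∀ x y : Vtx N, (if mergeMap n₁ n₂ x = x' ∧ mergeMap n₁ n₂ y = y'
          then G.q x y else 0) = 0 := by
        intro x y
        split_ifs with h
        · refine G.q_eq_zero x y fun hxy => hγ ⟨x, y, hxy, h.1, h.2⟩
        · rfl
      simp [this]
    · rintro x' ⟨x, y, hxy, hx, hy⟩
      rw [mergeMap_eq_inp] at hy
      subst hy
      exact G.no_into_inp x hxy
    · rintro y' ⟨x, y, hxy, hx, hy⟩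
      rw [mergeMap_eq_out] at hx
      subst hx
      exact G.no_from_out y hxy
end

section
/- Let G = (N, Σ, β, γ, q, i, o) be a stochastic directed action graph such that from every node n ∈ N there is a directed walk along arcs of positive flow probability from n to the output node o, and let n₀ > 0 be a real number. Then there exists a unique function f : γ → ℝ satisfying the arc equations f(i,k) = q(i,k)·n₀ for every arc (i,k) ∈ γ and f(s,k) = q(s,k) · ∑_{x : (x,s)∈γ} f(x,s) for every arc (s,k) ∈ γ with s ∈ N; moreover f is nonnegative and satisfies the conservation equations: for every node s ∈ N, ∑_{x : (x,s)∈γ} f(x,s) = ∑_{k : (s,k)∈γ} f(s,k), and ∑_{k : (i,k)∈γ} f(i,k) = n₀ = ∑_{x : (x,o)∈γ} f(x,o). -/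
open scoped Classical BigOperators

variable {S Act : Type} [Fintype S] [Fintype Act]

/-! ### Auxiliary lemmas for Statement 14 -/

/-- Decomposition of a sum over the vertices of an action graph. -/
lemma sum_vtx_decomp {N : Type} [Fintype N] (g : Vtx N → ℝ) :
    ∑ y : Vtx N, g y = g Vtx.inp + g Vtx.out + ∑ n, g (Vtx.node n) := by
  let e : Vtx N ≃ Option (Option N) :=
    { toFun := fun v => match v with
        | Vtx.inp => none | Vtx.out => some none | Vtx.node n => some (some n)
      invFun := fun o => match o with
        | none => Vtx.inp | some none => Vtx.out | some (some n) => Vtx.node n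
      left_inv := by rintro (_|_|n) <;> rfl
      right_inv := by rintro (_|(_|n)) <;> rfl }
  rw [← e.symm.sum_comp g, Fintype.sum_option, Fintype.sum_option]
  show g Vtx.inp + (g Vtx.out + ∑ n, g (Vtx.node n)) =
    g Vtx.inp + g Vtx.out + ∑ n, g (Vtx.node n)
  ring

/-- The total outflow of a node of an SDAG. -/
lemma sdag_row_sum {N Act : Type} [Fintype N] [Fintype Act] (G : SDAG N Act) (t : N) :
    G.q (Vtx.node t) Vtx.inp + G.q (Vtx.node t) Vtx.out +
      ∑ s, G.q (Vtx.node t) (Vtx.node s) = 1 := by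
  rw [← sum_vtx_decomp (fun y => G.q (Vtx.node t) y)]
  exact G.sum_q _ (by intro h; cases h)

/-- Nonnegativity of solutions to the inflow equations. -/
lemma sdag_nonneg_sol {N Act : Type} [Fintype N] [Fintype Act] (G : SDAG N Act)
    (hwalk : ∀ n : N, Relation.ReflTransGen
      (fun x y => G.γ x y ∧ 0 < G.q x y) (Vtx.node n) Vtx.out)
    (c v : N → ℝ) (hc : ∀ s, 0 ≤ c s)
    (heq : ∀ s, v s = c s + ∑ t, G.q (Vtx.node t) (Vtx.node s) * v t) :
    ∀ s, 0 ≤ v s := by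
  classical
  by_contra hcon
  push_neg at hcon
  obtain ⟨s₀, hs₀⟩ := hcon
  set A : N → N → ℝ := fun t s => G.q (Vtx.node t) (Vtx.node s) with hA
  set S : Finset N := Finset.univ.filter (fun s => v s < 0) with hS
  have hmem : ∀ s, s ∈ S ↔ v s < 0 := by intro s; simp [hS]
  have hS0 : s₀ ∈ S := (hmem s₀).2 hs₀
  set r : N → ℝ := fun t => ∑ s ∈ S, A t s with hr
  have hr_nonneg : ∀ t, 0 ≤ r t := fun t =>
    Finset.sum_nonneg (fun s _ => G.q_nonneg _ _)
  have hr_le_one : ∀ t, r t ≤ 1 := by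
    intro t
    have h1 : r t ≤ ∑ s, A t s :=
      Finset.sum_le_sum_of_subset_of_nonneg (Finset.subset_univ S)
        (fun s _ _ => G.q_nonneg _ _)
    have h2 := sdag_row_sum G t
    have h3 := G.q_nonneg (Vtx.node t) Vtx.inp
    have h4 := G.q_nonneg (Vtx.node t) Vtx.out
    simp only [hA] at h1 ⊢
    linarith
  -- main sum identity
  have h1 : ∑ s ∈ S, v s = (∑ s ∈ S, c s) + ∑ t : N, v t * r t := by
    calc ∑ s ∈ S, v s = ∑ s ∈ S, (c s + ∑ t : N, A t s * v t) :=
          Finset.sum_congr rfl (fun s _ => heq s)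
      _ = (∑ s ∈ S, c s) + ∑ s ∈ S, ∑ t : N, A t s * v t := Finset.sum_add_distrib
      _ = (∑ s ∈ S, c s) + ∑ t : N, ∑ s ∈ S, A t s * v t := by rw [Finset.sum_comm]
      _ = (∑ s ∈ S, c s) + ∑ t : N, v t * r t := by
          congr 1
          refine Finset.sum_congr rfl (fun t _ => ?_)
          rw [hr, Finset.mul_sum]
          exact Finset.sum_congr rfl (fun s _ => mul_comm _ _)
  have h2 : ∀ t ∈ S, v t ≤ v t * r t := by
    intro t ht
    have hv : v t ≤ 0 := le_of_lt ((hmem t).1 ht)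
    have := mul_le_mul_of_nonpos_left (hr_le_one t) hv
    linarith
  have h3 : ∑ t ∈ S, v t * r t ≤ ∑ t : N, v t * r t := by
    apply Finset.sum_le_sum_of_subset_of_nonneg (Finset.subset_univ S)
    intro t _ htS
    have hv : 0 ≤ v t := by
      by_contra h; push_neg at h; exact htS ((hmem t).2 h)
    exact mul_nonneg hv (hr_nonneg t)
  have h4 : ∑ t ∈ S, v t ≤ ∑ t ∈ S, v t * r t := Finset.sum_le_sum h2
  have hcS : 0 ≤ ∑ s ∈ S, c s := Finset.sum_nonneg (fun s _ => hc s)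
  -- equality of the middle sums
  have h5 : ∑ t ∈ S, v t = ∑ t ∈ S, v t * r t := by linarith
  have h6 : ∀ t ∈ S, v t = v t * r t :=
    (Finset.sum_eq_sum_iff_of_le h2).1 h5
  have hr_one : ∀ t ∈ S, r t = 1 := by
    intro t ht
    have hv : v t ≠ 0 := ne_of_lt ((hmem t).1 ht)
    have := h6 t ht
    have : v t * 1 = v t * r t := by linarith
    exact (mul_left_cancel₀ hv this).symm
  -- trap structure: edges of positive probability from S stay in S
  have htrap : ∀ t ∈ S, ∀ y : Vtx N, 0 < G.q (Vtx.node t) y →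
      ∃ s ∈ S, y = Vtx.node s := by
    intro t ht y hy
    have hrow := sdag_row_sum G t
    have hsplit : ∑ s, A t s = (∑ s ∈ S, A t s) + ∑ s ∈ Finset.univ \ S, A t s := by
      rw [← Finset.sum_sdiff (Finset.subset_univ S)]; ring
    have hzero : G.q (Vtx.node t) Vtx.inp + G.q (Vtx.node t) Vtx.out +
        ∑ s ∈ Finset.univ \ S, A t s = 0 := by
      have := hr_one t ht
      simp only [hr] at this
      simp only [hA] at hsplit ⊢
      linarith
    have hinp0 : G.q (Vtx.node t) Vtx.inp = 0 := by
      have h1 := G.q_nonneg (Vtx.node t) Vtx.inp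
      have h2 := G.q_nonneg (Vtx.node t) Vtx.out
      have h3 : 0 ≤ ∑ s ∈ Finset.univ \ S, A t s :=
        Finset.sum_nonneg (fun s _ => G.q_nonneg _ _)
      linarith
    have hout0 : G.q (Vtx.node t) Vtx.out = 0 := by
      have h1 := G.q_nonneg (Vtx.node t) Vtx.inp
      have h2 := G.q_nonneg (Vtx.node t) Vtx.out
      have h3 : 0 ≤ ∑ s ∈ Finset.univ \ S, A t s :=
        Finset.sum_nonneg (fun s _ => G.q_nonneg _ _)
      linarith
    have hnode0 : ∀ s ∉ S, A t s = 0 := by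
      intro s hsS
      have h1 := G.q_nonneg (Vtx.node t) Vtx.inp
      have h2 := G.q_nonneg (Vtx.node t) Vtx.out
      have hsum0 : ∑ s ∈ Finset.univ \ S, A t s = 0 := by linarith
      have := (Finset.sum_eq_zero_iff_of_nonneg
        (fun s _ => G.q_nonneg (Vtx.node t) (Vtx.node s))).1 hsum0 s
        (Finset.mem_sdiff.2 ⟨Finset.mem_univ s, hsS⟩)
      exact this
    match y with
    | Vtx.inp => rw [hinp0] at hy; exact absurd hy (lt_irrefl 0)
    | Vtx.out => rw [hout0] at hy; exact absurd hy (lt_irrefl 0)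
    | Vtx.node s =>
      refine ⟨s, ?_, rfl⟩
      by_contra hsS
      have h0 : G.q (Vtx.node t) (Vtx.node s) = 0 := hnode0 s hsS
      rw [h0] at hy
      exact absurd hy (lt_irrefl 0)
  -- path induction: nothing in S reaches out
  have hpath : ∀ x : Vtx N, Relation.ReflTransGen
      (fun x y => G.γ x y ∧ 0 < G.q x y) x Vtx.out →
      ∀ t, x = Vtx.node t → t ∉ S := by
    intro x hx
    induction hx using Relation.ReflTransGen.head_induction_on with
    | refl => intro t ht; exact absurd ht (by intro h; cases h)
    | head hab _ ih =>
      intro t ht htS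
      subst ht
      obtain ⟨s, hsS, hy⟩ := htrap t htS _ hab.2
      exact ih s hy hsS
  exact hpath (Vtx.node s₀) (hwalk s₀) s₀ rfl hS0

/-- Uniqueness of solutions to the inflow equations. -/
lemma sdag_unique_sol {N Act : Type} [Fintype N] [Fintype Act] (G : SDAG N Act)
    (hwalk : ∀ n : N, Relation.ReflTransGen
      (fun x y => G.γ x y ∧ 0 < G.q x y) (Vtx.node n) Vtx.out)
    (c v w : N → ℝ)
    (hv : ∀ s, v s = c s + ∑ t, G.q (Vtx.node t) (Vtx.node s) * v t)
    (hw : ∀ s, w s = c s + ∑ t, G.q (Vtx.node t) (Vtx.node s) * w t) :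
    v = w := by
  have hd : ∀ s, (v - w) s = (fun _ => (0:ℝ)) s +
      ∑ t, G.q (Vtx.node t) (Vtx.node s) * (v - w) t := by
    intro s
    have h1 := hv s
    have h2 := hw s
    simp only [Pi.sub_apply, mul_sub, Finset.sum_sub_distrib, zero_add]
    linarith
  have hd' : ∀ s, (w - v) s = (fun _ => (0:ℝ)) s +
      ∑ t, G.q (Vtx.node t) (Vtx.node s) * (w - v) t := by
    intro s
    have h1 := hv s
    have h2 := hw s
    simp only [Pi.sub_apply, mul_sub, Finset.sum_sub_distrib, zero_add]
    linarith
  have hp := sdag_nonneg_sol G hwalk _ _ (fun _ => le_refl 0) hd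
  have hp' := sdag_nonneg_sol G hwalk _ _ (fun _ => le_refl 0) hd'
  funext s
  have := hp s
  have := hp' s
  simp only [Pi.sub_apply] at *
  linarith

/-- Existence of solutions to the inflow equations. -/
lemma sdag_exists_sol {N Act : Type} [Fintype N] [Fintype Act] (G : SDAG N Act)
    (hwalk : ∀ n : N, Relation.ReflTransGen
      (fun x y => G.γ x y ∧ 0 < G.q x y) (Vtx.node n) Vtx.out)
    (c : N → ℝ) :
    ∃ v : N → ℝ, ∀ s, v s = c s + ∑ t, G.q (Vtx.node t) (Vtx.node s) * v t := by
  classical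
  set L : (N → ℝ) →ₗ[ℝ] (N → ℝ) :=
    { toFun := fun v s => v s - ∑ t, G.q (Vtx.node t) (Vtx.node s) * v t
      map_add' := by
        intro v w
        funext s
        simp only [Pi.add_apply, mul_add, Finset.sum_add_distrib]
        ring
      map_smul' := by
        intro a v
        funext s
        simp only [Pi.smul_apply, smul_eq_mul, RingHom.id_apply]
        rw [mul_sub, Finset.mul_sum]
        congr 1
        exact Finset.sum_congr rfl (fun t _ => by ring) } with hL
  have hinj : Function.Injective L := by
    intro a b hab
    have h0 : L (a - b) = 0 := by rw [map_sub, hab, sub_self]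
    have hd : ∀ s, (a - b) s = (fun _ => (0:ℝ)) s +
        ∑ t, G.q (Vtx.node t) (Vtx.node s) * (a - b) t := by
      intro s
      have := congrFun h0 s
      simp only [hL, LinearMap.coe_mk, AddHom.coe_mk, Pi.zero_apply] at this
      simp only [zero_add]
      linarith
    have hd' : ∀ s, (b - a) s = (fun _ => (0:ℝ)) s +
        ∑ t, G.q (Vtx.node t) (Vtx.node s) * (b - a) t := by
      intro s
      have h1 := hd s
      simp only [Pi.sub_apply, mul_sub, Finset.sum_sub_distrib, zero_add] at h1 ⊢
      linarith
    have hp := sdag_nonneg_sol G hwalk _ _ (fun _ => le_refl 0) hd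
    have hp' := sdag_nonneg_sol G hwalk _ _ (fun _ => le_refl 0) hd'
    funext s
    have := hp s
    have := hp' s
    simp only [Pi.sub_apply] at *
    linarith
  have hsurj : Function.Surjective L := LinearMap.injective_iff_surjective.mp hinj
  obtain ⟨v, hv⟩ := hsurj c
  refine ⟨v, fun s => ?_⟩
  have := congrFun hv s
  simp only [hL, LinearMap.coe_mk, AddHom.coe_mk] at this
  linarith

/-- The inflow equation satisfied by any function obeying the arc equations. -/
lemma sdag_cond_inflow {N Act : Type} [Fintype N] [Fintype Act] (G : SDAG N Act)
    (n₀ : ℝ) (f : Vtx N → Vtx N → ℝ)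
    (h1 : ∀ x y, ¬ G.γ x y → f x y = 0)
    (h2 : ∀ k, G.γ Vtx.inp k → f Vtx.inp k = G.q Vtx.inp k * n₀)
    (h3 : ∀ (s : N) (k : Vtx N), G.γ (Vtx.node s) k →
      f (Vtx.node s) k = G.q (Vtx.node s) k * ∑ x, f x (Vtx.node s)) :
    ∀ s : N, (∑ x, f x (Vtx.node s)) = G.q Vtx.inp (Vtx.node s) * n₀ +
      ∑ t, G.q (Vtx.node t) (Vtx.node s) * (∑ x, f x (Vtx.node t)) := by
  intro s
  rw [sum_vtx_decomp (fun x => f x (Vtx.node s))]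
  have hout : f Vtx.out (Vtx.node s) = 0 := h1 _ _ (G.no_from_out _)
  have hinp : f Vtx.inp (Vtx.node s) = G.q Vtx.inp (Vtx.node s) * n₀ := by
    by_cases h : G.γ Vtx.inp (Vtx.node s)
    · exact h2 _ h
    · rw [h1 _ _ h, G.q_eq_zero _ _ h, zero_mul]
  have hnode : ∀ t : N, f (Vtx.node t) (Vtx.node s) =
      G.q (Vtx.node t) (Vtx.node s) * (∑ x, f x (Vtx.node t)) := by
    intro t
    by_cases h : G.γ (Vtx.node t) (Vtx.node s)
    · exact h3 _ _ h
    · rw [h1 _ _ h, G.q_eq_zero _ _ h, zero_mul]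
  rw [hout, hinp, add_zero]
  congr 1
  exact Finset.sum_congr rfl (fun t _ => hnode t)

/-- If from every node of an SDAG `G` there is a directed walk
along arcs of positive flow probability to the output node, and `n₀ > 0`, then
there is a unique function `f` on the arcs (extended by `0` outside `γ`)
satisfying the arc equations, and it is nonnegative and satisfies the
conservation equations. -/
theorem sdag_frequencies_exist_unique {N Act : Type} [Fintype N] [Fintype Act]
    (G : SDAG N Act)
    (hwalk : ∀ n : N, Relation.ReflTransGen
      (fun x y => G.γ x y ∧ 0 < G.q x y) (Vtx.node n) Vtx.out)
    (n₀ : ℝ) (hn₀ : 0 < n₀) :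
    (∃! f : Vtx N → Vtx N → ℝ,
        (∀ x y, ¬ G.γ x y → f x y = 0) ∧
        (∀ k, G.γ Vtx.inp k → f Vtx.inp k = G.q Vtx.inp k * n₀) ∧
        (∀ (s : N) (k : Vtx N), G.γ (Vtx.node s) k →
          f (Vtx.node s) k = G.q (Vtx.node s) k * ∑ x, f x (Vtx.node s))) ∧
    (∀ f : Vtx N → Vtx N → ℝ,
        ((∀ x y, ¬ G.γ x y → f x y = 0) ∧
         (∀ k, G.γ Vtx.inp k → f Vtx.inp k = G.q Vtx.inp k * n₀) ∧
         (∀ (s : N) (k : Vtx N), G.γ (Vtx.node s) k →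
           f (Vtx.node s) k = G.q (Vtx.node s) k * ∑ x, f x (Vtx.node s))) →
        (∀ x y, 0 ≤ f x y) ∧
        (∀ s : N, ∑ x, f x (Vtx.node s) = ∑ k, f (Vtx.node s) k) ∧
        (∑ k, f Vtx.inp k = n₀) ∧ (∑ x, f x Vtx.out = n₀)) := by
  classical
  obtain ⟨v, hveq⟩ := sdag_exists_sol G hwalk (fun s => G.q Vtx.inp (Vtx.node s) * n₀)
  set mass : Vtx N → ℝ := fun x => match x with
    | Vtx.inp => n₀ | Vtx.out => 0 | Vtx.node t => v t with hmass
  set f : Vtx N → Vtx N → ℝ := fun x y => G.q x y * mass x with hf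
  have hfsum : ∀ s : N, ∑ x, f x (Vtx.node s) = v s := by
    intro s
    rw [sum_vtx_decomp (fun x => f x (Vtx.node s))]
    show G.q Vtx.inp (Vtx.node s) * n₀ + G.q Vtx.out (Vtx.node s) * 0 +
      (∑ t, G.q (Vtx.node t) (Vtx.node s) * v t) = v s
    rw [mul_zero, add_zero]
    exact (hveq s).symm
  have hcond1 : ∀ x y, ¬ G.γ x y → f x y = 0 := by
    intro x y h
    show G.q x y * mass x = 0
    rw [G.q_eq_zero x y h, zero_mul]
  have hcond2 : ∀ k, G.γ Vtx.inp k → f Vtx.inp k = G.q Vtx.inp k * n₀ := fun k _ => rfl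
  have hcond3 : ∀ (s : N) (k : Vtx N), G.γ (Vtx.node s) k →
      f (Vtx.node s) k = G.q (Vtx.node s) k * ∑ x, f x (Vtx.node s) := by
    intro s k _
    rw [hfsum s]
  constructor
  · refine ⟨f, ⟨hcond1, hcond2, hcond3⟩, ?_⟩
    intro g ⟨hg1, hg2, hg3⟩
    have hw := sdag_cond_inflow G n₀ g hg1 hg2 hg3
    have hwv : (fun s => ∑ x, g x (Vtx.node s)) = v :=
      sdag_unique_sol G hwalk (fun s => G.q Vtx.inp (Vtx.node s) * n₀) _ v hw hveq
    funext x y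
    match x with
    | Vtx.out =>
      rw [hg1 _ _ (G.no_from_out y)]
      show (0:ℝ) = G.q Vtx.out y * 0
      rw [mul_zero]
    | Vtx.inp =>
      by_cases h : G.γ Vtx.inp y
      · rw [hg2 y h]
      · rw [hg1 _ _ h]; exact (hcond1 _ _ h).symm
    | Vtx.node t =>
      by_cases h : G.γ (Vtx.node t) y
      · rw [hg3 t y h]
        have hvt : ∑ x, g x (Vtx.node t) = v t := congrFun hwv t
        rw [hvt]
      · rw [hg1 _ _ h]; exact (hcond1 _ _ h).symm
  · intro g ⟨hg1, hg2, hg3⟩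
    have hw := sdag_cond_inflow G n₀ g hg1 hg2 hg3
    have hwpos : ∀ s, 0 ≤ ∑ x, g x (Vtx.node s) :=
      sdag_nonneg_sol G hwalk (fun s => G.q Vtx.inp (Vtx.node s) * n₀)
        (fun s => ∑ x, g x (Vtx.node s))
        (fun s => mul_nonneg (G.q_nonneg _ _) hn₀.le) hw
    have hnoderow : ∀ k, ∀ s : N, g (Vtx.node s) k =
        G.q (Vtx.node s) k * ∑ x, g x (Vtx.node s) := by
      intro k s
      by_cases h : G.γ (Vtx.node s) k
      · exact hg3 s k h
      · rw [hg1 _ _ h, G.q_eq_zero _ _ h, zero_mul]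
    have hinprow : ∀ k, g Vtx.inp k = G.q Vtx.inp k * n₀ := by
      intro k
      by_cases h : G.γ Vtx.inp k
      · exact hg2 k h
      · rw [hg1 _ _ h, G.q_eq_zero _ _ h, zero_mul]
    have hcons : ∀ s : N, ∑ x, g x (Vtx.node s) = ∑ k, g (Vtx.node s) k := by
      intro s
      have h1 : ∑ k, g (Vtx.node s) k =
          (∑ k, G.q (Vtx.node s) k) * ∑ x, g x (Vtx.node s) := by
        rw [Finset.sum_mul]
        exact Finset.sum_congr rfl (fun k _ => hnoderow k s)
      rw [h1, G.sum_q _ (by intro h; cases h), one_mul]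
    have hinpsum : ∑ k, g Vtx.inp k = n₀ := by
      have h1 : ∑ k, g Vtx.inp k = (∑ k, G.q Vtx.inp k) * n₀ := by
        rw [Finset.sum_mul]
        exact Finset.sum_congr rfl (fun k _ => hinprow k)
      rw [h1, G.sum_q _ (by intro h; cases h), one_mul]
    refine ⟨?_, hcons, hinpsum, ?_⟩
    · intro x y
      match x with
      | Vtx.out => rw [hg1 _ _ (G.no_from_out y)]
      | Vtx.inp =>
        rw [hinprow y]
        exact mul_nonneg (G.q_nonneg _ _) hn₀.le
      | Vtx.node t =>
        rw [hnoderow y t]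
        exact mul_nonneg (G.q_nonneg _ _) (hwpos t)
    · -- output conservation by double counting
      have houtrow : ∑ k, g Vtx.out k = 0 :=
        Finset.sum_eq_zero (fun k _ => hg1 _ _ (G.no_from_out k))
      have hinpcol : ∑ x, g x Vtx.inp = 0 :=
        Finset.sum_eq_zero (fun x _ => hg1 _ _ (G.no_into_inp x))
      have hcomm : ∑ x : Vtx N, ∑ y : Vtx N, g x y = ∑ y : Vtx N, ∑ x : Vtx N, g x y :=
        Finset.sum_comm
      have hL : ∑ x : Vtx N, ∑ y, g x y = n₀ + ∑ s, ∑ x, g x (Vtx.node s) := by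
        rw [sum_vtx_decomp (fun x => ∑ y, g x y)]
        show (∑ k, g Vtx.inp k) + (∑ k, g Vtx.out k) + (∑ s, ∑ k, g (Vtx.node s) k) = _
        rw [hinpsum, houtrow, add_zero]
        congr 1
        exact Finset.sum_congr rfl (fun s _ => (hcons s).symm)
      have hR : ∑ y : Vtx N, ∑ x, g x y =
          (∑ x, g x Vtx.out) + ∑ s, ∑ x, g x (Vtx.node s) := by
        rw [sum_vtx_decomp (fun y => ∑ x, g x y)]
        show (∑ x, g x Vtx.inp) + (∑ x, g x Vtx.out) + _ = _
        rw [hinpcol, zero_add]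
      rw [hcomm, hR] at hL
      linarith
end
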